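/- arXiv:2004.02716 — 5 statements merged into one kernel-verified Lean document; each statement's English description precedes it below -/
import Mathlib

section
/- Let X be a locally compact metric space and φ a free flow on X. Then for every point x ∈ X there exists a sequence of flowboxes {B_n}_{n∈ℕ} with nonempty interior, with central slices {S_n} and lengths {l_n}, such that: (i) S_n ⊆ S_{n−1} ∩ int(B_{n−1}) for every n ≥ 1; (ii) for every L > 0 there exists N ∈ ℕ such that l_n > L for every n > N; (iii) S_n is contained in the open ball of radius 1/n around x, for every n ≥ 1; (iv) for every n ∈ ℕ and every 0 < l ≤ l_n, the flowbox φ(S_n × [−l/2, +l/2]) has nonempty interior; (v) for every n ∈ ℕ and every 0 < η < l_n/2 there exists k > n such that whenever L₁ ≤ L₂ are real numbers with −l_n/2 < L₁ − η and L₂ + η < l_n/2, one has φ(S_k × [L₁, L₂]) ⊆ int(φ(S_n × [L₁ − η, L₂ + η])). -/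
open Set

/-- A flow is *free* if it has no periodic points. -/
def Flow.IsFree {X : Type*} [TopologicalSpace X] (φ : Flow ℝ X) : Prop :=
  ∀ (x : X) (t : ℝ), φ t x = x → t = 0

/-- A flow is *minimal* if the forward orbit of every point is dense. -/
def Flow.IsMinimal {X : Type*} [TopologicalSpace X] (φ : Flow ℝ X) : Prop :=
  ∀ x : X, Dense {y : X | ∃ t : ℝ, 0 ≤ t ∧ φ t x = y}

/-- `B` is a flowbox of length `l` for the flow `φ`. -/
def IsFlowbox {X : Type*} [TopologicalSpace X] (φ : Flow ℝ X) (B : Set X) (l : ℝ) : Prop :=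
  IsCompact B ∧ 0 < l ∧
    ∀ x ∈ B, ∃ am ap ε : ℝ, am ≤ 0 ∧ 0 ≤ ap ∧ 0 < ε ∧ l = ap - am ∧
      (∀ t ∈ Set.Icc am ap, φ t x ∈ B) ∧
      (∀ t ∈ Set.Ioo (am - ε) am ∪ Set.Ioo ap (ap + ε), φ t x ∉ B)

/-- The central slice of a flowbox: the points whose visit interval is symmetric. -/
def centralSlice {X : Type*} [TopologicalSpace X] (φ : Flow ℝ X) (B : Set X) : Set X :=
  {x ∈ B | ∃ a : ℝ, 0 ≤ a ∧ (∀ t ∈ Set.Icc (-a) a, φ t x ∈ B) ∧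
    ∃ ε : ℝ, 0 < ε ∧ ∀ t ∈ Set.Ioo (-a - ε) (-a) ∪ Set.Ioo a (a + ε), φ t x ∉ B}

/-- `φ(S × I)`, the tube obtained flowing the set `S` along the times in `I`. -/
def flowTube {X : Type*} [TopologicalSpace X] (φ : Flow ℝ X) (S : Set X) (I : Set ℝ) : Set X :=
  {x | ∃ y ∈ S, ∃ t ∈ I, φ t y = x}

/-- First arrive time `τ_S(x) = min {t > 0 | φ_t(x) ∈ S}`. -/
noncomputable def firstArriveTime {X : Type*} [TopologicalSpace X] (φ : Flow ℝ X)
    (S : Set X) (x : X) : ℝ :=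
  sInf {t : ℝ | 0 < t ∧ φ t x ∈ S}

/-- First return map `Φ_S(x) = φ_{τ_S(x)}(x)`. -/
noncomputable def firstReturnMap {X : Type*} [TopologicalSpace X] (φ : Flow ℝ X)
    (S : Set X) (x : X) : X :=
  φ (firstArriveTime φ S x) x

/-- `S` is a clopen subset of `C` (in the subspace topology of `C`). -/
def IsClopenIn {X : Type*} [TopologicalSpace X] (S C : Set X) : Prop :=
  (∃ U : Set X, IsOpen U ∧ S = U ∩ C) ∧ (∃ F : Set X, IsClosed F ∧ S = F ∩ C)

/-!
Since `x` is not fixed by `φ 1`, averaging a bump function at `x` over unit time along the flow gives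
a continuous `h` which strictly decreases along short orbit segments through points near `x`. Its
level sets `S_r = closedBall x r ∩ {h = h x}` are local sections: every point near `x` flows onto
`S_r` in arbitrarily short time, and, by freeness and compactness of time intervals, for small `r`
the set `S_r` does not return to itself within any prescribed time. A tube `φ(S × [-l/2, l/2])`
over a compact `S` without returns within time `3l/2` is a flowbox with central slice `S`. Taking
`l_n = n + 1` and radii `r_n → 0` with `closedBall x r_{n+1}` inside the interior of the `n`-th box
gives the required sequence.
-/

open Metric Filter Topology MeasureTheory

lemma exists_seq_of_eventually {α : Type*} {f : Filter α} [f.NeBot] {P : ℕ → α → Prop}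
    {Q : ℕ → α → α → Prop} (hP : ∀ n, ∀ᶠ a in f, P n a)
    (hQ : ∀ n a, P n a → ∀ᶠ b in f, Q n a b) :
    ∃ r : ℕ → α, ∀ n, P n (r n) ∧ Q n (r n) (r (n + 1)) := by
  have hnext : ∀ n a, ∃ b, P (n + 1) b ∧ (P n a → Q n a b) := by
    intro n a
    by_cases ha : P n a
    · obtain ⟨b, hb, hQb⟩ := ((hP (n + 1)).and (hQ n a ha)).exists
      exact ⟨b, hb, fun _ => hQb⟩
    · obtain ⟨b, hb⟩ := (hP (n + 1)).exists
      exact ⟨b, hb, fun h => absurd h ha⟩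
  choose next hnextP hnextQ using hnext
  obtain ⟨r₀, hr₀⟩ := (hP 0).exists
  let r : ℕ → α := fun n => Nat.rec r₀ next n
  have hr : ∀ n, P n (r n) := fun n => by
    induction n with
    | zero => exact hr₀
    | succ n _ => exact hnextP n (r n)
  exact ⟨r, fun n => ⟨hr n, hnextQ n (r n) (hr n)⟩⟩

lemma eq_of_exit_right {J : Set ℝ} {d e a ε : ℝ} (hd : 0 ≤ d) (he : 0 < e)
    (hJ : ∀ t ∈ Icc 0 (d + e), t ∈ J ↔ t ≤ d) (ha : 0 ≤ a) (hε : 0 < ε) (hin : Icc 0 a ⊆ J)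
    (hout : ∀ t ∈ Ioo a (a + ε), t ∉ J) : a = d := by
  apply le_antisymm
  · by_contra! hda
    have hmem : min a (d + e) ∈ Icc 0 (d + e) := ⟨le_min ha (by linarith), min_le_right _ _⟩
    have := (hJ _ hmem).1 (hin ⟨hmem.1, min_le_left _ _⟩)
    exact (lt_min hda (by linarith)).not_ge this
  · by_contra! had
    have hmem : min (a + ε / 2) d ∈ Icc 0 (d + e) :=
      ⟨le_min (by linarith) (by linarith), by linarith [min_le_right (a + ε / 2) d]⟩
    exact hout _ ⟨lt_min (by linarith) had, by linarith [min_le_left (a + ε / 2) d]⟩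
      ((hJ _ hmem).2 (min_le_right _ _))

lemma eq_and_eq_of_exit {J : Set ℝ} {c d e am ap ε : ℝ} (hc : c ≤ 0) (hd : 0 ≤ d) (he : 0 < e)
    (hJ : ∀ t ∈ Icc (c - e) (d + e), t ∈ J ↔ t ∈ Icc c d) (ham : am ≤ 0) (hap : 0 ≤ ap)
    (hε : 0 < ε) (hin : Icc am ap ⊆ J) (hout : ∀ t ∈ Ioo (am - ε) am ∪ Ioo ap (ap + ε), t ∉ J) :
    am = c ∧ ap = d := by
  constructor
  · have := eq_of_exit_right (J := {t | -t ∈ J}) (d := -c) (neg_nonneg.2 hc) he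
      (fun t ht => by
        show -t ∈ J ↔ _
        rw [hJ _ ⟨by linarith [ht.2], by linarith [ht.1]⟩, mem_Icc]
        exact ⟨fun h => by linarith [h.1], fun h => ⟨by linarith, by linarith [ht.1]⟩⟩)
      (neg_nonneg.2 ham) hε (fun t ht => hin ⟨by linarith [ht.2], by linarith [ht.1]⟩)
      (fun t ht => hout (-t) (Or.inl ⟨by linarith [ht.2], by linarith [ht.1]⟩))
    linarith
  · exact eq_of_exit_right hd he
      (fun t ht => by
        rw [hJ _ ⟨by linarith [ht.1], ht.2⟩, mem_Icc]
        exact ⟨And.right, fun h => ⟨by linarith [ht.1], h⟩⟩)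
      hap hε (fun t ht => hin ⟨by linarith [ht.1], ht.2⟩) (fun t ht => hout t (Or.inr ht))

section TopologicalSpace

variable {X : Type*} [TopologicalSpace X] (φ : Flow ℝ X)

lemma exists_flow_mem_of_mem_nhds {x : X} {t₀ : ℝ} {U : Set X} (hU : U ∈ 𝓝 (φ t₀ x)) :
    ∃ ρ > 0, ∃ W ∈ 𝓝 x, ∀ t, |t - t₀| ≤ ρ → ∀ y ∈ W, φ t y ∈ U := by
  obtain ⟨V, hV, W, hW, hVW⟩ := mem_nhds_prod_iff.1
    ((φ.continuous continuous_fst continuous_snd).continuousAt.preimage_mem_nhds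
      (x := (t₀, x)) hU)
  obtain ⟨ρ, hρ, hρV⟩ := nhds_basis_closedBall.mem_iff.1 hV
  exact ⟨ρ, hρ, W, hW, fun t ht y hy => hVW (mk_mem_prod (hρV (mem_closedBall.2 ht)) hy)⟩

def NoReturnWithin (S : Set X) (T : ℝ) : Prop :=
  ∀ y ∈ S, ∀ t : ℝ, t ≠ 0 → |t| ≤ T → φ t y ∉ S

lemma isCompact_flowTube {S : Set X} {I : Set ℝ} (hS : IsCompact S) (hI : IsCompact I) :
    IsCompact (flowTube φ S I) := by
  have : flowTube φ S I = (fun p : X × ℝ => φ p.2 p.1) '' (S ×ˢ I) := by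
    ext; simp [flowTube, and_assoc]
  rw [this]
  exact (hS.prod hI).image (φ.continuous continuous_snd continuous_fst)

lemma flow_mem_flowTube_Icc_iff {S : Set X} {T a t : ℝ} {y : X} (hS : NoReturnWithin φ S T)
    (hy : y ∈ S) (ht : |t| + a ≤ T) :
    φ t y ∈ flowTube φ S (Icc (-a) a) ↔ |t| ≤ a := by
  refine ⟨?_, fun h => ⟨y, hy, t, abs_le.1 h, rfl⟩⟩
  rintro ⟨z, hz, v, hv, hzv⟩
  have hv' : |v| ≤ a := abs_le.2 hv
  have hyz : φ (t - v) y = z := by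
    rw [sub_eq_neg_add, φ.map_add, ← hzv, ← φ.map_add, neg_add_cancel, φ.map_zero_apply]
  by_contra hta
  have htv : t - v ≠ 0 := fun h => hta (by rwa [sub_eq_zero.1 h])
  exact hS y hy (t - v) htv (by linarith [abs_sub t v]) (hyz ▸ hz)

lemma flow_mem_flowTube_Icc_iff_mem_Icc {S : Set X} {T a s t : ℝ} {y : X}
    (hS : NoReturnWithin φ S T) (hT : 3 * a ≤ T) (hy : y ∈ S)
    (ht : t ∈ Icc (-a - s - a) (a - s + a)) :
    φ t (φ s y) ∈ flowTube φ S (Icc (-a) a) ↔ t ∈ Icc (-a - s) (a - s) := by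
  have hts : |t + s| ≤ 2 * a := abs_le.2 ⟨by linarith [ht.1], by linarith [ht.2]⟩
  rw [← φ.map_add, flow_mem_flowTube_Icc_iff φ hS hy (by linarith), abs_le, mem_Icc]
  constructor <;> intro h <;> constructor <;> linarith [h.1, h.2]

lemma flow_mem_flowTube_Icc {S : Set X} {a s t : ℝ} {y : X} (hy : y ∈ S)
    (ht : t ∈ Icc (-a - s) (a - s)) : φ t (φ s y) ∈ flowTube φ S (Icc (-a) a) :=
  ⟨y, hy, t + s, ⟨by linarith [ht.1], by linarith [ht.2]⟩, φ.map_add t s y⟩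

lemma flow_notMem_flowTube_Icc {S : Set X} {T a s t : ℝ} {y : X} (hS : NoReturnWithin φ S T)
    (hT : 3 * a ≤ T) (hy : y ∈ S) (ht : t ∈ Ioo (-a - s - a) (-a - s) ∪ Ioo (a - s) (a - s + a)) :
    φ t (φ s y) ∉ flowTube φ S (Icc (-a) a) := by
  have hnear : t ∈ Icc (-a - s - a) (a - s + a) := by
    rcases ht with ht | ht <;> constructor <;> linarith [ht.1, ht.2]
  rw [flow_mem_flowTube_Icc_iff_mem_Icc φ hS hT hy hnear, mem_Icc]
  rcases ht with ht | ht <;> intro h <;> linarith [ht.1, ht.2, h.1, h.2]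

lemma isFlowbox_flowTube {S : Set X} {l : ℝ} (hS : IsCompact S) (hl : 0 < l)
    (hret : NoReturnWithin φ S (3 * l / 2)) :
    IsFlowbox φ (flowTube φ S (Icc (-(l / 2)) (l / 2))) l := by
  refine ⟨isCompact_flowTube φ hS isCompact_Icc, hl, ?_⟩
  rintro _ ⟨y, hy, s, hs, rfl⟩
  exact ⟨-(l / 2) - s, l / 2 - s, l / 2, by linarith [hs.1], by linarith [hs.2], by linarith,
    by ring, fun t => flow_mem_flowTube_Icc φ hy,
    fun t => flow_notMem_flowTube_Icc φ hret (by linarith) hy⟩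

lemma centralSlice_flowTube {S : Set X} {l : ℝ} (hl : 0 < l)
    (hret : NoReturnWithin φ S (3 * l / 2)) :
    centralSlice φ (flowTube φ S (Icc (-(l / 2)) (l / 2))) = S := by
  apply Subset.antisymm
  · rintro _ ⟨⟨y, hy, s, hs, rfl⟩, a, ha, hin, ε, hε, hout⟩
    obtain ⟨hleft, hright⟩ := eq_and_eq_of_exit
      (J := {t | φ t (φ s y) ∈ flowTube φ S (Icc (-(l / 2)) (l / 2))})
      (c := -(l / 2) - s) (d := l / 2 - s) (e := l / 2) (by linarith [hs.1]) (by linarith [hs.2])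
      (by linarith) (fun t => flow_mem_flowTube_Icc_iff_mem_Icc φ hret (by linarith) hy)
      (neg_nonpos.2 ha) ha hε hin hout
    rwa [show s = 0 by linarith, φ.map_zero_apply]
  · intro y hy
    refine ⟨⟨y, hy, 0, ⟨by linarith, by linarith⟩, φ.map_zero_apply y⟩, l / 2, by linarith,
      fun t ht => ⟨y, hy, t, ht, rfl⟩, l / 2, by linarith, fun t ht => ?_⟩
    simpa only [φ.map_zero_apply] using flow_notMem_flowTube_Icc φ (s := 0) hret (by linarith) hy
      (by simpa only [sub_zero] using ht)

lemma flowTube_Icc_subset_interior {S T : Set X} {η : ℝ}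
    (hT : T ⊆ interior (flowTube φ S (Icc (-η) η))) (L₁ L₂ : ℝ) :
    flowTube φ T (Icc L₁ L₂) ⊆ interior (flowTube φ S (Icc (L₁ - η) (L₂ + η))) := by
  rintro _ ⟨y, hy, t, ht, rfl⟩
  have hshift : φ t '' flowTube φ S (Icc (-η) η) ⊆ flowTube φ S (Icc (L₁ - η) (L₂ + η)) := by
    rintro _ ⟨_, ⟨z, hz, s, hs, rfl⟩, rfl⟩
    exact ⟨z, hz, t + s, ⟨by linarith [ht.1, hs.1], by linarith [ht.2, hs.2]⟩, φ.map_add t s z⟩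
  have himage : φ t '' interior (flowTube φ S (Icc (-η) η)) =
      interior (φ t '' flowTube φ S (Icc (-η) η)) := (φ.toHomeomorph t).image_interior _
  exact interior_mono hshift (himage ▸ mem_image_of_mem _ (hT hy))

noncomputable def flowAverage (u : X → ℝ) (y : X) : ℝ :=
  ∫ τ in (0 : ℝ)..1, u (φ τ y)

variable {u : X → ℝ}

lemma continuous_flowAverage (hu : Continuous u) : Continuous (flowAverage φ u) :=
  intervalIntegral.continuous_parametric_intervalIntegral_of_continuous'
    (show Continuous fun p : X × ℝ => u (φ p.2 p.1) from
      hu.comp (φ.continuous continuous_snd continuous_fst)) 0 1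

lemma flowAverage_flow (y : X) (t : ℝ) :
    flowAverage φ u (φ t y) = ∫ τ in t..t + 1, u (φ τ y) := by
  simp only [flowAverage, ← φ.map_add]
  rw [intervalIntegral.integral_comp_add_right (fun τ => u (φ τ y)), zero_add, add_comm]

lemma strictAntiOn_flowAverage (hu : Continuous u) {y : X} {ρ : ℝ}
    (hpos : ∀ τ ∈ Icc (-ρ) ρ, 0 < u (φ τ y)) (hzero : ∀ τ ∈ Icc (1 - ρ) (1 + ρ), u (φ τ y) = 0) :
    StrictAntiOn (fun t => flowAverage φ u (φ t y)) (Icc (-ρ) ρ) := by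
  intro s hs t ht hst
  have hint : ∀ a b : ℝ, IntervalIntegrable (fun τ => u (φ τ y)) volume a b := fun a b =>
    (hu.comp (φ.continuous continuous_id continuous_const)).intervalIntegrable a b
  have hgain : 0 < ∫ τ in s..t, u (φ τ y) :=
    intervalIntegral.intervalIntegral_pos_of_pos_on (hint s t)
      (fun τ hτ => hpos τ ⟨hs.1.trans hτ.1.le, hτ.2.le.trans ht.2⟩) hst
  have hloss : ∫ τ in s + 1..t + 1, u (φ τ y) = 0 := by
    rw [intervalIntegral.integral_congr (g := fun _ => (0 : ℝ)), intervalIntegral.integral_zero]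
    intro τ hτ
    rw [uIcc_of_le (by linarith)] at hτ
    exact hzero τ ⟨by linarith [hτ.1, hs.1], by linarith [hτ.2, ht.2]⟩
  simp only [flowAverage_flow]
  rw [← intervalIntegral.integral_add_adjacent_intervals (hint s t) (hint t (s + 1)),
    ← intervalIntegral.integral_add_adjacent_intervals (hint t (s + 1)) (hint (s + 1) (t + 1))]
  linarith

end TopologicalSpace

section MetricSpace

variable {X : Type*} [MetricSpace X] (φ : Flow ℝ X)

lemma exists_strictAntiOn_flow {x : X} (hx : φ 1 x ≠ x) :
    ∃ h : X → ℝ, Continuous h ∧ ∃ ρ > 0, ∃ W ∈ 𝓝 x,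
      ∀ y ∈ W, StrictAntiOn (fun t => h (φ t y)) (Icc (-ρ) ρ) := by
  set ε := dist (φ 1 x) x / 2
  have hε : 0 < ε := half_pos (dist_pos.2 hx)
  -- Orbits through points near `x` lie in the support of `u` at times near `0`, and outside it at
  -- times near `1` since `dist (φ 1 x) x = 2 * ε`.
  set u : X → ℝ := fun z => max 0 (ε - dist z x)
  have hu : Continuous u := by fun_prop
  obtain ⟨ρ₀, hρ₀, W₀, hW₀, hnear⟩ := exists_flow_mem_of_mem_nhds φ (t₀ := 0)
    (by rw [φ.map_zero_apply]; exact ball_mem_nhds x hε)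
  obtain ⟨ρ₁, hρ₁, W₁, hW₁, hfar⟩ := exists_flow_mem_of_mem_nhds φ (t₀ := 1)
    (ball_mem_nhds (φ 1 x) hε)
  refine ⟨flowAverage φ u, continuous_flowAverage φ hu, min ρ₀ ρ₁, lt_min hρ₀ hρ₁, W₀ ∩ W₁,
    inter_mem hW₀ hW₁, fun y hy => strictAntiOn_flowAverage φ hu (fun τ hτ => ?_)
    (fun τ hτ => ?_)⟩
  · have := mem_ball.1 <| hnear τ (by
      rw [sub_zero, abs_le]; constructor <;> linarith [hτ.1, hτ.2, min_le_left ρ₀ ρ₁]) y hy.1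
    exact lt_max_of_lt_right (by linarith)
  · have := mem_ball.1 <| hfar τ (by
      rw [abs_le]; constructor <;> linarith [hτ.1, hτ.2, min_le_right ρ₀ ρ₁]) y hy.2
    have hx1 : dist (φ 1 x) x = 2 * ε := by ring
    exact max_eq_left (by linarith [dist_triangle_left (φ 1 x) x (φ τ y)])

lemma exists_dist_flow_gt {C : Set ℝ} (hC : IsCompact C) {x : X} (hx : ∀ w ∈ C, φ w x ≠ x) :
    ∃ c > 0, ∀ᶠ y in 𝓝 x, ∀ w ∈ C, c < dist (φ w y) x := by
  obtain ⟨m, hm, hmC⟩ := hC.exists_forall_le' (f := fun w => dist (φ w x) x)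
    ((φ.continuous continuous_id continuous_const).dist continuous_const).continuousOn
    (fun w hw => dist_pos.2 (hx w hw))
  refine ⟨m / 2, half_pos hm, hC.eventually_forall_of_forall_eventually fun w hw => ?_⟩
  exact continuousAt_const.eventually_lt
    ((φ.continuous continuous_snd continuous_fst).dist continuous_const).continuousAt
    (by linarith [hmC w hw])

def localSection (h : X → ℝ) (x : X) (r : ℝ) : Set X :=
  closedBall x r ∩ h ⁻¹' {h x}

variable {h : X → ℝ} {x : X} {ρ : ℝ}

lemma localSection_mono {r r' : ℝ} (hr : r ≤ r') : localSection h x r ⊆ localSection h x r' :=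
  inter_subset_inter_left _ (closedBall_subset_closedBall hr)

lemma isClosed_localSection (hh : Continuous h) (r : ℝ) : IsClosed (localSection h x r) :=
  isClosed_closedBall.inter (isClosed_singleton.preimage hh)

lemma flowTube_localSection_mem_nhds (hh : Continuous h) (hρ : 0 < ρ)
    (hanti : StrictAntiOn (fun t => h (φ t x)) (Icc (-ρ) ρ)) {r a : ℝ} (hr : 0 < r)
    (ha : 0 < a) : flowTube φ (localSection h x r) (Icc (-a) a) ∈ 𝓝 x := by
  obtain ⟨b₀, hb₀, W, hW, hball⟩ := exists_flow_mem_of_mem_nhds φ (t₀ := 0)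
    (by rw [φ.map_zero_apply]; exact ball_mem_nhds x hr)
  set b := min (min a ρ) b₀
  have hb : 0 < b := lt_min (lt_min ha hρ) hb₀
  have hmem : ∀ t ∈ Icc (-b) b, t ∈ Icc (-ρ) ρ := fun t ht => by
    constructor <;> linarith [ht.1, ht.2, min_le_left (min a ρ) b₀, min_le_right a ρ]
  have hcross : {y | h (φ b y) < h x} ∩ {y | h x < h (φ (-b) y)} ∈ 𝓝 x := by
    refine IsOpen.mem_nhds ((isOpen_lt (hh.comp (φ.continuous continuous_const continuous_id))
      continuous_const).inter (isOpen_lt continuous_const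
      (hh.comp (φ.continuous continuous_const continuous_id)))) ?_
    have h0 : h (φ 0 x) = h x := by rw [φ.map_zero_apply]
    have hb0 : (0 : ℝ) ∈ Icc (-b) b := ⟨by linarith, hb.le⟩
    exact ⟨h0 ▸ hanti (hmem 0 hb0) (hmem b ⟨by linarith, le_rfl⟩) hb,
      h0 ▸ hanti (hmem (-b) ⟨le_rfl, by linarith⟩) (hmem 0 hb0) (neg_lt_zero.2 hb)⟩
  filter_upwards [hW, hcross] with y hyW hy
  obtain ⟨t, ht, hty⟩ := intermediate_value_Icc' (neg_le_self hb.le)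
    (hh.comp (φ.continuous continuous_id continuous_const)).continuousOn ⟨hy.1.le, hy.2.le⟩
  have htb : |t - 0| ≤ b₀ := by
    rw [sub_zero, abs_le]; constructor <;> linarith [ht.1, ht.2, min_le_right (min a ρ) b₀]
  refine ⟨φ t y, ⟨ball_subset_closedBall (hball t htb y hyW), hty⟩, -t, ?_,
    by rw [← φ.map_add, neg_add_cancel, φ.map_zero_apply]⟩
  constructor <;> linarith [ht.1, ht.2, min_le_left (min a ρ) b₀, min_le_left a ρ]

lemma eventually_noReturnWithin_localSection (hfree : φ.IsFree) (hρ : 0 < ρ) {W : Set X}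
    (hW : W ∈ 𝓝 x) (hanti : ∀ y ∈ W, StrictAntiOn (fun t => h (φ t y)) (Icc (-ρ) ρ)) (T : ℝ) :
    ∀ᶠ r in 𝓝 (0 : ℝ), NoReturnWithin φ (localSection h x r) T := by
  obtain ⟨c, hc, hfar⟩ := exists_dist_flow_gt φ (isCompact_Icc.diff isOpen_Ioo)
    (C := Icc (-T) T \ Ioo (-ρ) ρ) (x := x)
    (fun w hw hwx => hw.2 (by rw [hfree x w hwx]; exact ⟨neg_lt_zero.2 hρ, hρ⟩))
  filter_upwards [eventually_closedBall_subset (inter_mem hfar hW), eventually_lt_nhds hc]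
    with r hsub hrc
  rintro y ⟨hyr, hyh⟩ t ht0 htT ⟨htr, hth⟩
  obtain ⟨hyfar, hyW⟩ := hsub hyr
  by_cases hshort : t ∈ Ioo (-ρ) ρ
  · refine ht0 ((hanti y hyW).injOn (Ioo_subset_Icc_self hshort) ⟨by linarith, hρ.le⟩ ?_)
    simp only [φ.map_zero_apply]
    exact hth.trans hyh.symm
  · linarith [hyfar t ⟨abs_le.1 htT, hshort⟩, mem_closedBall.1 htr]

lemma exists_radii_localSection [LocallyCompactSpace X] (hfree : φ.IsFree) (hh : Continuous h)
    (hρ : 0 < ρ) {W : Set X} (hW : W ∈ 𝓝 x)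
    (hanti : ∀ y ∈ W, StrictAntiOn (fun t => h (φ t y)) (Icc (-ρ) ρ)) {l : ℕ → ℝ}
    (hl : ∀ n, 0 < l n) :
    ∃ r : ℕ → ℝ, (∀ n, 0 < r n) ∧ (∀ n, r n < 1 / (n + 1)) ∧
      (∀ n, IsCompact (localSection h x (r n))) ∧
      (∀ n, NoReturnWithin φ (localSection h x (r n)) (3 * l n / 2)) ∧
      (∀ n, r (n + 1) ≤ r n) ∧
      ∀ n, closedBall x (r (n + 1)) ⊆
        interior (flowTube φ (localSection h x (r n)) (Icc (-(l n / 2)) (l n / 2))) := by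
  obtain ⟨K, hK, hKx⟩ := exists_compact_mem_nhds x
  obtain ⟨r, hr⟩ := exists_seq_of_eventually (f := 𝓝[>] (0 : ℝ))
    (P := fun n r => 0 < r ∧ r < 1 / (n + 1) ∧ IsCompact (localSection h x r) ∧
      NoReturnWithin φ (localSection h x r) (3 * l n / 2))
    (Q := fun n r r' => r' ≤ r ∧ closedBall x r' ⊆
      interior (flowTube φ (localSection h x r) (Icc (-(l n / 2)) (l n / 2))))
    (fun n => by
      filter_upwards [self_mem_nhdsWithin, nhdsWithin_le_nhds
        ((eventually_lt_nhds (by positivity : (0 : ℝ) < 1 / (n + 1))).and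
        ((eventually_closedBall_subset hKx).and
        (eventually_noReturnWithin_localSection φ hfree hρ hW hanti (3 * l n / 2))))]
        with r hr ⟨hrn, hrK, hret⟩
      exact ⟨hr, hrn, hK.of_isClosed_subset (isClosed_localSection hh r)
        (inter_subset_left.trans hrK), hret⟩)
    (fun n r hr => nhdsWithin_le_nhds ((eventually_le_nhds hr.1).and
      (eventually_closedBall_subset (interior_mem_nhds.2 (flowTube_localSection_mem_nhds φ hh hρ
        (hanti x (mem_of_mem_nhds hW)) hr.1 (half_pos (hl n)))))))
  exact ⟨r, fun n => (hr n).1.1, fun n => (hr n).1.2.1, fun n => (hr n).1.2.2.1,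
    fun n => (hr n).1.2.2.2, fun n => (hr n).2.1, fun n => (hr n).2.2⟩

end MetricSpace

/-- Lemma `lem0`: existence of a flowbox structure around any point of a
locally compact metric space carrying a free flow. -/
theorem exists_flowbox_structure {X : Type*} [MetricSpace X] [LocallyCompactSpace X]
    (φ : Flow ℝ X) (hfree : φ.IsFree) (x : X) :
    ∃ (B : ℕ → Set X) (l : ℕ → ℝ),
      (∀ n, IsFlowbox φ (B n) (l n)) ∧
      (∀ n, (interior (B n)).Nonempty) ∧
      -- (i)
      (∀ n : ℕ, 1 ≤ n →
        centralSlice φ (B n) ⊆ centralSlice φ (B (n - 1)) ∩ interior (B (n - 1))) ∧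
      -- (ii)
      (∀ L : ℝ, 0 < L → ∃ N : ℕ, ∀ n : ℕ, N < n → L < l n) ∧
      -- (iii)
      (∀ n : ℕ, 1 ≤ n → centralSlice φ (B n) ⊆ Metric.ball x (1 / (n : ℝ))) ∧
      -- (iv)
      (∀ n : ℕ, ∀ l' : ℝ, 0 < l' → l' ≤ l n →
        (interior (flowTube φ (centralSlice φ (B n))
          (Set.Icc (-(l' / 2)) (l' / 2)))).Nonempty) ∧
      -- (v)
      (∀ n : ℕ, ∀ η : ℝ, 0 < η → η < l n / 2 → ∃ k : ℕ, n < k ∧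
        ∀ L₁ L₂ : ℝ, L₁ ≤ L₂ → -(l n / 2) < L₁ - η → L₂ + η < l n / 2 →
          flowTube φ (centralSlice φ (B k)) (Set.Icc L₁ L₂) ⊆
            interior (flowTube φ (centralSlice φ (B n)) (Set.Icc (L₁ - η) (L₂ + η)))) := by
  obtain ⟨h, hh, ρ, hρ, W, hW, hanti⟩ :=
    exists_strictAntiOn_flow φ (fun h1 => one_ne_zero (hfree x 1 h1))
  set l : ℕ → ℝ := fun n => n + 1
  have hl : ∀ n, 0 < l n := fun n => by positivity
  obtain ⟨r, hr, hr_lt, hcpt, hret, hr_anti, hnest⟩ :=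
    exists_radii_localSection φ hfree hh hρ hW hanti hl
  set S := fun n => localSection h x (r n)
  have hslice : ∀ n, centralSlice φ (flowTube φ (S n) (Icc (-(l n / 2)) (l n / 2))) = S n :=
    fun n => centralSlice_flowTube φ (hl n) (hret n)
  have hnhds : ∀ n a, 0 < a → flowTube φ (S n) (Icc (-a) a) ∈ 𝓝 x := fun n a ha =>
    flowTube_localSection_mem_nhds φ hh hρ (hanti x (mem_of_mem_nhds hW)) (hr n) ha
  have hr0 : Tendsto r atTop (𝓝 0) := squeeze_zero (fun n => (hr n).le)
    (fun n => (hr_lt n).le) tendsto_one_div_add_atTop_nhds_zero_nat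
  refine ⟨fun n => flowTube φ (S n) (Icc (-(l n / 2)) (l n / 2)), l,
    fun n => isFlowbox_flowTube φ (hcpt n) (hl n) (hret n),
    fun n => ⟨x, mem_interior_iff_mem_nhds.2 (hnhds n _ (half_pos (hl n)))⟩, ?_, ?_, ?_, ?_, ?_⟩
  · intro n hn
    obtain ⟨m, rfl⟩ := Nat.exists_eq_add_of_le' hn
    simp only [Nat.add_sub_cancel, hslice]
    exact subset_inter (localSection_mono (hr_anti m)) (inter_subset_left.trans (hnest m))
  · exact fun L _ => ⟨⌈L⌉₊, fun n hn => by linarith [Nat.lt_of_ceil_lt hn]⟩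
  · intro n hn
    rw [hslice]
    refine inter_subset_left.trans (closedBall_subset_ball ((hr_lt n).trans_le ?_))
    exact one_div_le_one_div_of_le (by exact_mod_cast hn) (by linarith)
  · intro n l' hl' _
    rw [hslice]
    exact ⟨x, mem_interior_iff_mem_nhds.2 (hnhds n _ (half_pos hl'))⟩
  · intro n η hη _
    obtain ⟨k, hk, hkn⟩ := ((hr0.eventually (eventually_closedBall_subset
      (interior_mem_nhds.2 (hnhds n η hη)))).and (eventually_gt_atTop n)).exists
    refine ⟨k, hkn, fun L₁ L₂ _ _ _ => ?_⟩
    rw [hslice, hslice]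
    exact flowTube_Icc_subset_interior φ (inter_subset_left.trans hk) L₁ L₂
end

section
/- Let X be a locally compact metric space, φ a free minimal flow on X, and let C be the central slice of a flowbox B with nonempty interior. Suppose C is a Cantor space and S, T, C' are clopen subsets of C with S, T ⊆ C' ⊆ C ∩ int(B). Suppose y ∈ S is such that Φ_{C'}(y) ∈ T. Then there is a clopen neighborhood V ⊆ S of y such that: (a) the map V → C', y' ↦ Φ_{C'}(y'), has image contained in T and is a homeomorphism onto its image; and (b) the map V → (0,∞), y' ↦ τ_{C'}(y'), is continuous. -/
open Set

/-!
Visit intervals of a flowbox are maximal, so the central slice is the closed set of points of `B`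
whose orbit stays in `B` during `[-l/2, l/2]`, and consecutive visits to it are more than `l` apart.
Every orbit passing near a point of `C' ⊆ interior B` crosses `C'` within a short time; with
minimality this makes the first arrive time finite, attained (`C'` is closed) and upper
semicontinuous, while compactness of the time intervals without visits gives lower semicontinuity.
The return map is injective on `C'`, since a common image reached earlier by one point would be an
earlier return of the other. Finally a clopen neighbourhood of `y` in the compact totally
disconnected slice, inside `S` and the preimage of `T`, is compact, so the continuous injective
return map is a homeomorphism onto its image there.
-/

open Filter Topology

section Gap

variable {p : ℝ → Prop} {a b a' b' ε : ℝ}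

theorem le_of_forall_Icc_of_gap_above (hab' : a ≤ b') (hε : 0 < ε) (hin : ∀ t ∈ Icc a b, p t)
    (hout : ∀ t ∈ Ioo b' (b' + ε), ¬ p t) : b ≤ b' := by
  by_contra! h
  exact hout (min b (b' + ε / 2))
    ⟨lt_min h (by linarith), (min_le_right _ _).trans_lt (by linarith)⟩
    (hin _ ⟨le_min (hab'.trans h.le) (by linarith), min_le_left _ _⟩)

theorem le_of_forall_Icc_of_gap_below (ha'b : a' ≤ b) (hε : 0 < ε) (hin : ∀ t ∈ Icc a b, p t)
    (hout : ∀ t ∈ Ioo (a' - ε) a', ¬ p t) : a' ≤ a := by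
  by_contra! h
  exact hout (max a (a' - ε / 2)) ⟨(by linarith : a' - ε < a' - ε / 2).trans_le (le_max_right _ _),
      max_lt h (by linarith)⟩
    (hin _ ⟨le_max_left _ _, max_le (h.le.trans ha'b) (by linarith)⟩)

end Gap

section IsClopenIn

variable {X : Type*} [TopologicalSpace X] {S C : Set X}

theorem IsClopenIn.subset (h : IsClopenIn S C) : S ⊆ C := by
  obtain ⟨U, -, rfl⟩ := h.1
  exact inter_subset_right

theorem IsClopenIn.isClosed (h : IsClopenIn S C) (hC : IsClosed C) : IsClosed S := by
  obtain ⟨F, hF, rfl⟩ := h.2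
  exact hF.inter hC

theorem IsClopenIn.isCompact (h : IsClopenIn S C) (hC : IsCompact C) : IsCompact S := by
  obtain ⟨F, hF, rfl⟩ := h.2
  exact hC.inter_left hF

theorem exists_isClopenIn_subset [T2Space X] (hC : IsCompact C) (htd : IsTotallyDisconnected C)
    {U : Set X} (hU : IsOpen U) {y : X} (hyU : y ∈ U) (hyC : y ∈ C) :
    ∃ V, y ∈ V ∧ V ⊆ U ∩ C ∧ IsClopenIn V C := by
  have : CompactSpace C := isCompact_iff_compactSpace.mp hC
  have : TotallyDisconnectedSpace C := totallyDisconnectedSpace_subtype_iff.mpr htd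
  obtain ⟨V, hV, hyV, hVU⟩ :=
    compact_exists_isClopen_in_isOpen (hU.preimage continuous_subtype_val) (x := ⟨y, hyC⟩) hyU
  obtain ⟨O, hO, hOV⟩ := isOpen_induced_iff.mp hV.2
  obtain ⟨F, hF, hFV⟩ := isClosed_induced_iff.mp hV.1
  refine ⟨Subtype.val '' V, ⟨_, hyV, rfl⟩, ?_, ⟨O, hO, ?_⟩, ⟨F, hF, ?_⟩⟩
  · rintro _ ⟨v, hv, rfl⟩
    exact ⟨hVU hv, v.2⟩
  · rw [← hOV, Subtype.image_preimage_coe, inter_comm]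
  · rw [← hFV, Subtype.image_preimage_coe, inter_comm]

end IsClopenIn

theorem ContinuousOn.exists_homeomorph_image_of_injOn {X Y : Type*} [TopologicalSpace X]
    [TopologicalSpace Y] [T2Space Y] {f : X → Y} {V : Set X} (hf : ContinuousOn f V)
    (hV : IsCompact V) (hinj : InjOn f V) : ∃ e : V ≃ₜ f '' V, ∀ v : V, (e v : Y) = f v := by
  have : CompactSpace V := isCompact_iff_compactSpace.mp hV
  have hcont : Continuous (Equiv.Set.imageOfInjOn f V hinj) :=
    hf.domRestrict.subtype_mk _
  exact ⟨hcont.homeoOfEquivCompactToT2, fun _ => rfl⟩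

section FirstReturn

variable {X : Type*} [TopologicalSpace X] {φ : Flow ℝ X} {S : Set X} {x : X}

theorem firstArriveTime_le {t : ℝ} (ht : 0 < t) (hS : φ t x ∈ S) : firstArriveTime φ S x ≤ t :=
  csInf_le ⟨0, fun _ hs => hs.1.le⟩ ⟨ht, hS⟩

theorem injOn_firstReturnMap (hpos : ∀ x ∈ S, 0 < firstArriveTime φ S x) :
    InjOn (firstReturnMap φ S) S := by
  intro x₁ h₁ x₂ h₂ heq
  wlog hle : firstArriveTime φ S x₁ ≤ firstArriveTime φ S x₂ generalizing x₁ x₂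
  · exact (this h₂ h₁ heq.symm (le_of_not_ge hle)).symm
  set t₁ := firstArriveTime φ S x₁
  set t₂ := firstArriveTime φ S x₂
  have hx₁ : x₁ = φ (t₂ - t₁) x₂ := by
    rw [sub_eq_neg_add, φ.map_add, ← firstReturnMap, ← heq, firstReturnMap, ← φ.map_add,
      neg_add_cancel, φ.map_zero_apply]
  rcases hle.eq_or_lt with heqt | hlt
  · rwa [heqt, sub_self, φ.map_zero_apply] at hx₁
  · -- `x₂` would reach `S` at time `t₂ - t₁ < t₂`
    have := firstArriveTime_le (sub_pos.mpr hlt) (hx₁ ▸ h₁)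
    linarith [hpos x₁ h₁]

theorem ContinuousOn.firstReturnMap {s : Set X} (h : ContinuousOn (firstArriveTime φ S) s) :
    ContinuousOn (firstReturnMap φ S) s :=
  φ.cont'.comp_continuousOn (h.prodMk continuousOn_id)

theorem eventually_forall_flow_not_mem (hS : IsClosed S) {K : Set ℝ} (hK : IsCompact K)
    (hx : ∀ t ∈ K, φ t x ∉ S) : ∀ᶠ w in 𝓝 x, ∀ t ∈ K, φ t w ∉ S :=
  hK.eventually_forall_of_forall_eventually fun t ht =>
    (φ.continuous continuous_snd continuous_fst).continuousAt (x := (x, t)) |>.eventually_mem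
      (hS.isOpen_compl.mem_nhds (hx t ht))

end FirstReturn

namespace IsFlowbox

variable {X : Type*} [TopologicalSpace X] {φ : Flow ℝ X} {B : Set X} {l : ℝ} {x : X}

theorem exists_exit (hB : IsFlowbox φ B l) (hx : x ∈ B)
    (h : ∀ t ∈ Icc (-(l / 2)) (l / 2), φ t x ∈ B) :
    ∃ ε > 0, ∀ t ∈ Ioo (-(l / 2) - ε) (-(l / 2)) ∪ Ioo (l / 2) (l / 2 + ε), φ t x ∉ B := by
  obtain ⟨am, ap, ε, ham, hap, hε, hlen, -, hout⟩ := hB.2.2 x hx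
  have hl := hB.2.1
  have h₁ : l / 2 ≤ ap :=
    le_of_forall_Icc_of_gap_above (by linarith) hε h fun t ht => hout t (.inr ht)
  have h₂ : am ≤ -(l / 2) :=
    le_of_forall_Icc_of_gap_below (by linarith) hε h fun t ht => hout t (.inl ht)
  obtain rfl : ap = l / 2 := by linarith
  obtain rfl : am = -(l / 2) := by linarith
  exact ⟨ε, hε, hout⟩

theorem mem_centralSlice_iff (hB : IsFlowbox φ B l) :
    x ∈ centralSlice φ B ↔ x ∈ B ∧ ∀ t ∈ Icc (-(l / 2)) (l / 2), φ t x ∈ B := by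
  refine ⟨fun ⟨hx, a, ha, hain, ε', hε', haout⟩ => ⟨hx, ?_⟩,
    fun ⟨hx, h⟩ => ⟨hx, l / 2, by linarith [hB.2.1], h, hB.exists_exit hx h⟩⟩
  obtain ⟨am, ap, ε, ham, hap, hε, hlen, hin, hout⟩ := hB.2.2 x hx
  have h₁ : ap ≤ a := le_of_forall_Icc_of_gap_above (by linarith) hε' hin
    fun t ht => haout t (.inr ht)
  have h₂ : a ≤ ap := le_of_forall_Icc_of_gap_above (by linarith) hε hain
    fun t ht => hout t (.inr ht)
  have h₃ : -a ≤ am := le_of_forall_Icc_of_gap_below (by linarith) hε' hin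
    fun t ht => haout t (.inl ht)
  have h₄ : am ≤ -a := le_of_forall_Icc_of_gap_below (by linarith) hε hain
    fun t ht => hout t (.inl ht)
  obtain rfl : a = l / 2 := by linarith
  exact hain

theorem isClosed_centralSlice [T2Space X] (hB : IsFlowbox φ B l) :
    IsClosed (centralSlice φ B) := by
  have hBc : IsClosed B := hB.1.isClosed
  have : centralSlice φ B = B ∩ ⋂ t ∈ Icc (-(l / 2)) (l / 2), φ t ⁻¹' B := by
    ext x
    simp only [hB.mem_centralSlice_iff, mem_inter_iff, mem_iInter, mem_preimage]
  rw [this]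
  exact hBc.inter (isClosed_biInter fun t _ => hBc.preimage (φ.continuous_toFun t))

theorem isCompact_centralSlice [T2Space X] (hB : IsFlowbox φ B l) :
    IsCompact (centralSlice φ B) :=
  hB.1.of_isClosed_subset hB.isClosed_centralSlice fun _ hx => hx.1

theorem lt_of_flow_mem_centralSlice (hB : IsFlowbox φ B l) (hx : x ∈ centralSlice φ B) {t : ℝ}
    (ht : 0 < t) (htx : φ t x ∈ centralSlice φ B) : l < t := by
  by_contra! htl
  obtain ⟨hxB, hxin⟩ := hB.mem_centralSlice_iff.mp hx
  have htxin := (hB.mem_centralSlice_iff.mp htx).2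
  obtain ⟨ε, hε, hout⟩ := hB.exists_exit hxB hxin
  -- the visits of `x` and of `φ t x` to `B` overlap, so `x` would stay in `B` beyond time `l / 2`
  have hin : ∀ s ∈ Icc (-(l / 2)) (t + l / 2), φ s x ∈ B := by
    intro s ⟨hs₁, hs₂⟩
    rcases le_total s (l / 2) with hs | hs
    · exact hxin s ⟨hs₁, hs⟩
    · rw [← sub_add_cancel s t, φ.map_add]
      exact htxin _ ⟨by linarith, by linarith⟩
  have := le_of_forall_Icc_of_gap_above (by linarith [hB.2.1]) hε hin
    fun s hs => hout s (.inr hs)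
  linarith

theorem eventually_exists_flow_mem_centralSlice [T2Space X] (hB : IsFlowbox φ B l)
    (hx : x ∈ centralSlice φ B) {δ : ℝ} (hδ : 0 < δ) :
    ∀ᶠ w in 𝓝 x, w ∈ B → ∃ s, |s| < δ ∧ φ s w ∈ centralSlice φ B := by
  obtain ⟨hxB, hxin⟩ := hB.mem_centralSlice_iff.mp hx
  obtain ⟨ε, hε, hout⟩ := hB.exists_exit hxB hxin
  obtain ⟨m, hm, hmε, hmδ⟩ : ∃ m, 0 < m ∧ m < ε ∧ m < δ :=
    ⟨min ε δ / 2, by positivity, by linarith [min_le_left ε δ], by linarith [min_le_right ε δ]⟩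
  have hexit : ∀ t, φ t x ∉ B → ∀ᶠ w in 𝓝 x, φ t w ∉ B := fun t ht =>
    (φ.continuous_toFun t).continuousAt.eventually_mem (hB.1.isClosed.isOpen_compl.mem_nhds ht)
  filter_upwards [hexit _ (hout (l / 2 + m) (.inr ⟨by linarith, by linarith⟩)),
    hexit _ (hout (-(l / 2) - m) (.inl ⟨by linarith, by linarith⟩))] with w hw_hi hw_lo hwB
  obtain ⟨am, ap, εw, ham, hap, -, hlen, hin, -⟩ := hB.2.2 w hwB
  have hap_lt : ap < l / 2 + m := lt_of_not_ge fun h => hw_hi (hin _ ⟨by linarith, h⟩)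
  have ham_gt : -(l / 2) - m < am := lt_of_not_ge fun h => hw_lo (hin _ ⟨h, by linarith⟩)
  refine ⟨ap - l / 2, abs_lt.mpr ⟨by linarith, by linarith⟩,
    hB.mem_centralSlice_iff.mpr ⟨hin _ ⟨by linarith, by linarith⟩, fun u ⟨hu₁, hu₂⟩ => ?_⟩⟩
  rw [← φ.map_add]
  exact hin _ ⟨by linarith, by linarith⟩

variable [T2Space X] {C' : Set X}

theorem eventually_exists_flow_mem (hB : IsFlowbox φ B l)
    (hC' : IsClopenIn C' (centralSlice φ B)) (hC'B : C' ⊆ interior B) (hx : x ∈ C') {δ : ℝ}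
    (hδ : 0 < δ) : ∀ᶠ w in 𝓝 x, ∃ s, |s| < δ ∧ φ s w ∈ C' := by
  obtain ⟨U, hU, rfl⟩ := hC'.1
  have hflowU : ∀ᶠ p in 𝓝 (0 : ℝ) ×ˢ 𝓝 x, φ p.1 p.2 ∈ U := by
    rw [← nhds_prod_eq]
    exact φ.cont'.continuousAt.eventually_mem (hU.mem_nhds (by simpa using hx.1))
  obtain ⟨δ₀, hδ₀, P, hP, hPU⟩ := Metric.eventually_nhds_prod_iff.mp hflowU
  filter_upwards [hB.eventually_exists_flow_mem_centralSlice hx.2 (lt_min hδ hδ₀), hP,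
    isOpen_interior.mem_nhds (hC'B hx)] with w hw hwP hwB
  obtain ⟨s, hs, hsC⟩ := hw (interior_subset hwB)
  have hsU : φ s w ∈ U :=
    hPU (by rw [Real.dist_eq, sub_zero]; exact hs.trans_le (min_le_right _ _)) hwP
  exact ⟨s, hs.trans_le (min_le_left _ _), hsU, hsC⟩

theorem exists_pos_flow_mem (hB : IsFlowbox φ B l) (hmin : φ.IsMinimal)
    (hC' : IsClopenIn C' (centralSlice φ B)) (hC'B : C' ⊆ interior B) (hne : C'.Nonempty)
    (x : X) : ∃ t > 0, φ t x ∈ C' := by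
  obtain ⟨z, hz⟩ := hne
  have hnear := hB.eventually_exists_flow_mem hC' hC'B hz one_pos
  obtain ⟨_, ⟨t, ht, rfl⟩, hp⟩ := (hmin (φ 2 x)).exists_mem_open isOpen_interior
    ⟨z, mem_interior_iff_mem_nhds.mpr hnear⟩
  obtain ⟨s, hs, hsC⟩ := interior_subset hp
  refine ⟨s + (t + 2), by linarith [(abs_lt.mp hs).1], ?_⟩
  rwa [φ.map_add, φ.map_add]

theorem firstArriveTime_spec (hB : IsFlowbox φ B l) (hC' : IsClopenIn C' (centralSlice φ B))
    (hx : x ∈ centralSlice φ B) (hret : ∃ t > 0, φ t x ∈ C') :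
    l < firstArriveTime φ C' x ∧ firstReturnMap φ C' x ∈ C' := by
  have hl := hB.2.1
  have hgt : ∀ t, 0 < t → φ t x ∈ C' → l < t := fun t ht htC =>
    hB.lt_of_flow_mem_centralSlice hx ht (hC'.subset htC)
  have hset : {t | 0 < t ∧ φ t x ∈ C'} = Ici l ∩ (φ · x) ⁻¹' C' := by
    ext t
    exact ⟨fun ⟨ht, htC⟩ => ⟨(hgt t ht htC).le, htC⟩, fun ⟨ht, htC⟩ => ⟨hl.trans_le ht, htC⟩⟩
  have hclosed : IsClosed (Ici l ∩ (φ · x) ⁻¹' C') := isClosed_Ici.inter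
    ((hC'.isClosed hB.isClosed_centralSlice).preimage (φ.continuous continuous_id continuous_const))
  obtain ⟨t, ht, htC⟩ := hret
  have hmem : firstArriveTime φ C' x ∈ Ici l ∩ (φ · x) ⁻¹' C' := by
    rw [firstArriveTime, hset]
    exact hclosed.csInf_mem (hset ▸ ⟨t, ht, htC⟩) ⟨l, fun _ h => h.1⟩
  exact ⟨hgt _ (hl.trans_le hmem.1) hmem.2, hmem.2⟩

theorem eventually_firstArriveTime_lt (hB : IsFlowbox φ B l)
    (hC' : IsClopenIn C' (centralSlice φ B)) (hC'B : C' ⊆ interior B) {t a : ℝ} (ht : 0 < t)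
    (htx : φ t x ∈ C') (hta : t < a) : ∀ᶠ w in 𝓝 x, firstArriveTime φ C' w < a := by
  have hnear := hB.eventually_exists_flow_mem hC' hC'B htx (lt_min (sub_pos.mpr hta) ht)
  filter_upwards [(φ.continuous_toFun t).continuousAt.eventually hnear] with w ⟨s, hs, hsC⟩
  have ⟨hs₁, hs₂⟩ := abs_lt.mp hs
  have := firstArriveTime_le (φ := φ) (by linarith [min_le_right (a - t) t])
    (by rwa [φ.map_add] : φ (s + t) w ∈ C')
  linarith [min_le_left (a - t) t]

theorem eventually_lt_firstArriveTime (hB : IsFlowbox φ B l)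
    (hC' : IsClopenIn C' (centralSlice φ B)) (hret : ∀ w, ∃ t > 0, φ t w ∈ C') {a : ℝ}
    (ha : a < firstArriveTime φ C' x) :
    ∀ᶠ w in 𝓝[centralSlice φ B] x, a < firstArriveTime φ C' w := by
  have hnot : ∀ t ∈ Icc l a, φ t x ∉ C' := fun t ⟨hlt, hta⟩ htC =>
    (firstArriveTime_le (hB.2.1.trans_le hlt) htC).not_gt (hta.trans_lt ha)
  filter_upwards [(eventually_forall_flow_not_mem (hC'.isClosed hB.isClosed_centralSlice)
    isCompact_Icc hnot).filter_mono nhdsWithin_le_nhds, self_mem_nhdsWithin] with w hw hwC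
  obtain ⟨hlt, hmem⟩ := hB.firstArriveTime_spec hC' hwC (hret w)
  exact lt_of_not_ge fun h => hw _ ⟨hlt.le, h⟩ hmem

theorem continuousOn_firstArriveTime (hB : IsFlowbox φ B l) (hmin : φ.IsMinimal)
    (hC' : IsClopenIn C' (centralSlice φ B)) (hC'B : C' ⊆ interior B) (hne : C'.Nonempty) :
    ContinuousOn (firstArriveTime φ C') (centralSlice φ B) := by
  have hret := hB.exists_pos_flow_mem hmin hC' hC'B hne
  intro x hx
  obtain ⟨hlt, hmem⟩ := hB.firstArriveTime_spec hC' hx (hret x)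
  exact tendsto_order.2 ⟨fun a ha => hB.eventually_lt_firstArriveTime hC' hret ha,
    fun a ha => (hB.eventually_firstArriveTime_lt hC' hC'B (hB.2.1.trans hlt) hmem ha).filter_mono
      nhdsWithin_le_nhds⟩

end IsFlowbox

theorem returnMap_clopen_local_homeo_general {X : Type*} [MetricSpace X]
    (φ : Flow ℝ X) (hmin : φ.IsMinimal)
    (B : Set X) (l : ℝ) (hB : IsFlowbox φ B l)
    (C : Set X) (hC : C = centralSlice φ B)
    -- `C` is a Cantor space:
    (hCtd : IsTotallyDisconnected C)
    (S T C' : Set X)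
    (hSclopen : IsClopenIn S C) (hTclopen : IsClopenIn T C) (hC'clopen : IsClopenIn C' C)
    (hS : S ⊆ C') (hC' : C' ⊆ C ∩ interior B)
    (y : X) (hy : y ∈ S) (hyT : firstReturnMap φ C' y ∈ T) :
    ∃ V : Set X, y ∈ V ∧ V ⊆ S ∧ IsClopenIn V C ∧
      Set.MapsTo (firstReturnMap φ C') V T ∧
      Set.InjOn (firstReturnMap φ C') V ∧
      ContinuousOn (firstReturnMap φ C') V ∧
      (∃ e : V ≃ₜ (firstReturnMap φ C' '' V), ∀ v : V, (e v : X) = firstReturnMap φ C' v) ∧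
      ContinuousOn (firstArriveTime φ C') V ∧
      (∀ v ∈ V, 0 < firstArriveTime φ C' v) := by
  subst hC
  have hC'B : C' ⊆ interior B := fun x hx => (hC' hx).2
  have hret := hB.exists_pos_flow_mem hmin hC'clopen hC'B ⟨y, hS hy⟩
  have hspec x (hx : x ∈ C') := hB.firstArriveTime_spec hC'clopen (hC' hx).1 (hret x)
  have hpos : ∀ x ∈ C', 0 < firstArriveTime φ C' x := fun x hx => hB.2.1.trans (hspec x hx).1
  have hτ := hB.continuousOn_firstArriveTime hmin hC'clopen hC'B ⟨y, hS hy⟩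
  have hΦ := hτ.firstReturnMap
  obtain ⟨US, hUS, rfl⟩ := hSclopen.1
  obtain ⟨UT, hUT, rfl⟩ := hTclopen.1
  obtain ⟨O, hO, hOeq⟩ := continuousOn_iff'.mp hΦ UT hUT
  obtain ⟨V, hyV, hVsub, hV⟩ := exists_isClopenIn_subset hB.isCompact_centralSlice hCtd
    (hUS.inter hO) ⟨hy.1, (hOeq.subset ⟨hyT.1, hy.2⟩).1⟩ hy.2
  have hVS : V ⊆ US ∩ centralSlice φ B := fun v hv => ⟨(hVsub hv).1.1, (hVsub hv).2⟩
  have hVC' : V ⊆ C' := hVS.trans hS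
  have hmaps : MapsTo (firstReturnMap φ C') V (UT ∩ centralSlice φ B) := fun v hv =>
    ⟨(hOeq.superset ⟨(hVsub hv).1.2, (hVsub hv).2⟩).1, (hC' (hspec v (hVC' hv)).2).1⟩
  have hinj := (injOn_firstReturnMap hpos).mono hVC'
  refine ⟨V, hyV, hVS, hV, hmaps, hinj, hΦ.mono hV.subset, ?_, hτ.mono hV.subset,
    fun v hv => hpos v (hVC' hv)⟩
  exact (hΦ.mono hV.subset).exists_homeomorph_image_of_injOn
    (hV.isCompact hB.isCompact_centralSlice) hinj

/-- Lemma `lema1`: local homeomorphism property of the first return map to a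
clopen subset of a Cantor central slice, and continuity of the first return time. -/
theorem returnMap_clopen_local_homeo {X : Type*} [MetricSpace X] [LocallyCompactSpace X]
    (φ : Flow ℝ X) (hfree : φ.IsFree) (hmin : φ.IsMinimal)
    (B : Set X) (l : ℝ) (hB : IsFlowbox φ B l) (hBint : (interior B).Nonempty)
    (C : Set X) (hC : C = centralSlice φ B)
    -- `C` is a Cantor space:
    (hCne : C.Nonempty) (hCtd : IsTotallyDisconnected C) (hCperf : Perfect C)
    (S T C' : Set X)
    (hSclopen : IsClopenIn S C) (hTclopen : IsClopenIn T C) (hC'clopen : IsClopenIn C' C)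
    (hS : S ⊆ C') (hT : T ⊆ C') (hC' : C' ⊆ C ∩ interior B)
    (y : X) (hy : y ∈ S) (hyT : firstReturnMap φ C' y ∈ T) :
    ∃ V : Set X, y ∈ V ∧ V ⊆ S ∧ IsClopenIn V C ∧
      Set.MapsTo (firstReturnMap φ C') V T ∧
      Set.InjOn (firstReturnMap φ C') V ∧
      ContinuousOn (firstReturnMap φ C') V ∧
      (∃ e : V ≃ₜ (firstReturnMap φ C' '' V), ∀ v : V, (e v : X) = firstReturnMap φ C' v) ∧
      ContinuousOn (firstArriveTime φ C') V ∧
      (∀ v ∈ V, 0 < firstArriveTime φ C' v) :=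
  returnMap_clopen_local_homeo_general φ hmin B l hB C hC hCtd S T C' hSclopen hTclopen hC'clopen hS
    hC' y hy hyT
end

section
/- Let X be a compact metric space endowed with a free minimal flow φ admitting a Cantor central slice S (i.e. S is the central slice of a flowbox with nonempty interior and S is a Cantor space), with first return map Φ := Φ_S|_S : S → S (a homeomorphism) and continuous first return time τ := τ_S|_S : S → (0,∞). Let X_{(S,Φ,τ)} = (ℝ × S)/∼ be the suspension of (S, Φ) associated to τ, with the quotient topology. Then: every class [t, x] ∈ X_{(S,Φ,τ)} has a unique representative (s, y) with y ∈ S and 0 ≤ s < τ(y); and the map ψ : X_{(S,Φ,τ)} → X determined by ψ([t, y]) = φ_t(y) for y ∈ S and t ∈ ℝ is a well-defined bijection, and moreover a homeomorphism. -/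
/-! The map `[t, y] ↦ φ_t(y)` is well defined because `Φⁿ y = φ_{τₙ(y)}(y)` for the Birkhoff sums
`τₙ` of `τ`. As `τ` is bounded below by some `δ > 0` on the compact slice, shifting by Birkhoff sums
brings every class to a representative `(s, y)` with `0 ≤ s < τ(y)`; as `τ` is the first return
time, two such representatives with the same image under the flow coincide. This gives the unique
representatives and the injectivity of the map, minimality gives its surjectivity, and the
suspension is compact as the image of `[0, max τ] × S`, so the continuous bijection onto the
Hausdorff space `X` is a homeomorphism. -/

open Set

lemma le_and_le_of_Icc_subset_of_gaps {T : Set ℝ} {b c ε b' c' : ℝ} (hε : 0 < ε)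
    (hgap : ∀ t ∈ Ioo (b - ε) b ∪ Ioo c (c + ε), t ∉ T) (hsub : Icc b' c' ⊆ T)
    (hbc' : b ≤ c') (hb'c : b' ≤ c) : b ≤ b' ∧ c' ≤ c := by
  constructor
  · by_contra! h
    exact hgap (max b' (b - ε / 2)) (Or.inl ⟨by simp [hε], by simp [h, hε]⟩)
      (hsub ⟨le_max_left _ _, max_le (by linarith) (by linarith)⟩)
  · by_contra! h
    exact hgap (min c' (c + ε / 2)) (Or.inr ⟨by simp [h, hε], by simp [hε]⟩)
      (hsub ⟨le_min (by linarith) (by linarith), min_le_left _ _⟩)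

section Flowbox

variable {X : Type*} [TopologicalSpace X] {φ : Flow ℝ X} {B : Set X} {l : ℝ}

lemma IsFlowbox.mem_centralSlice_iff_s3 (hB : IsFlowbox φ B l) {x : X} :
    x ∈ centralSlice φ B ↔ x ∈ B ∧ ∀ t ∈ Icc (-(l / 2)) (l / 2), φ t x ∈ B := by
  constructor
  · rintro ⟨hxB, a, ha, hin, ε, hε, hout⟩
    obtain ⟨am, ap, ε', ham, hap, hε', hl, hin', hout'⟩ := hB.2.2 x hxB
    have h₁ := le_and_le_of_Icc_subset_of_gaps (T := {t | φ t x ∈ B}) hε' hout' hin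
      (by linarith) (by linarith)
    have h₂ := le_and_le_of_Icc_subset_of_gaps (T := {t | φ t x ∈ B}) hε hout hin'
      (by linarith) (by linarith)
    obtain rfl : a = l / 2 := by linarith [h₁.1, h₁.2, h₂.1, h₂.2]
    exact ⟨hxB, hin⟩
  · rintro ⟨hxB, hin⟩
    obtain ⟨am, ap, ε, ham, hap, hε, hl, hin', hout⟩ := hB.2.2 x hxB
    have h := le_and_le_of_Icc_subset_of_gaps (T := {t | φ t x ∈ B}) hε hout hin
      (by linarith [hB.2.1]) (by linarith [hB.2.1])
    obtain ⟨rfl, rfl⟩ : am = -(l / 2) ∧ ap = l / 2 :=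
      ⟨by linarith [h.1, h.2], by linarith [h.1, h.2]⟩
    exact ⟨hxB, l / 2, by linarith [hB.2.1], hin', ε, hε, hout⟩

lemma IsFlowbox.isClosed_centralSlice_s3 [T2Space X] (hB : IsFlowbox φ B l) :
    IsClosed (centralSlice φ B) := by
  have hBc := hB.1.isClosed
  have h : centralSlice φ B = B ∩ ⋂ t ∈ Icc (-(l / 2)) (l / 2), φ t ⁻¹' B := by
    ext x
    simp only [mem_inter_iff, mem_iInter, mem_preimage, hB.mem_centralSlice_iff_s3]
  rw [h]
  exact hBc.inter (isClosed_biInter fun t _ => hBc.preimage (φ.continuous_toFun t))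

lemma IsFlowbox.isCompact_centralSlice_s3 [T2Space X] (hB : IsFlowbox φ B l) :
    IsCompact (centralSlice φ B) :=
  hB.1.of_isClosed_subset hB.isClosed_centralSlice_s3 fun _ hx => hx.1

lemma IsFlowbox.exists_flow_mem_centralSlice (hB : IsFlowbox φ B l) {x : X} (hx : x ∈ B) :
    ∃ c, φ c x ∈ centralSlice φ B := by
  obtain ⟨am, ap, ε, ham, hap, hε, -, hin, hout⟩ := hB.2.2 x hx
  refine ⟨(am + ap) / 2, hin _ ⟨by linarith, by linarith⟩, (ap - am) / 2, by linarith,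
    fun t ht => ?_, ε, hε, fun t ht => ?_⟩
  · rw [← φ.map_add]
    exact hin _ ⟨by linarith [ht.1], by linarith [ht.2]⟩
  · rw [← φ.map_add]
    refine hout _ (ht.imp (fun h => ⟨?_, ?_⟩) (fun h => ⟨?_, ?_⟩)) <;> linarith [h.1, h.2]

lemma Flow.IsMinimal.exists_flow_eq_of_interior_nonempty (hmin : φ.IsMinimal) {U : Set X}
    (hU : (interior U).Nonempty) (z : X) : ∃ w ∈ U, ∃ t, φ t w = z := by
  obtain ⟨w, ⟨t, -, rfl⟩, hw⟩ := (hmin z).exists_mem_open isOpen_interior hU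
  exact ⟨_, interior_subset hw, -t, by rw [← φ.map_add, neg_add_cancel, φ.map_zero_apply]⟩

lemma Flow.IsMinimal.exists_mem_centralSlice_flow_eq (hmin : φ.IsMinimal)
    (hB : IsFlowbox φ B l) (hBint : (interior B).Nonempty) (z : X) :
    ∃ y ∈ centralSlice φ B, ∃ t, φ t y = z := by
  obtain ⟨w, hw, t, rfl⟩ := hmin.exists_flow_eq_of_interior_nonempty hBint z
  obtain ⟨c, hc⟩ := hB.exists_flow_mem_centralSlice hw
  exact ⟨_, hc, t - c, by rw [← φ.map_add, sub_add_cancel]⟩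

end Flowbox

lemma firstArriveTime_le_s3 {X : Type*} [TopologicalSpace X] (φ : Flow ℝ X) {S : Set X} {x : X}
    {u : ℝ} (hu : 0 < u) (hx : φ u x ∈ S) : firstArriveTime φ S x ≤ u :=
  csInf_le ⟨0, fun _ ht => ht.1.le⟩ ⟨hu, hx⟩

section Suspension

variable {S : Type*} {Φ : S → S} {τ : S → ℝ}

variable (Φ τ) in
def suspensionRel (p q : ℝ × S) : Prop :=
  ∃ n : ℕ, 1 ≤ n ∧
    ((q.2 = Φ^[n] p.2 ∧ p.1 = birkhoffSum Φ τ n p.2 + q.1) ∨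
     (p.2 = Φ^[n] q.2 ∧ q.1 = birkhoffSum Φ τ n q.2 + p.1))

lemma quot_mk_add_birkhoffSum (s : ℝ) (n : ℕ) (y : S) :
    Quot.mk (suspensionRel Φ τ) (s + birkhoffSum Φ τ n y, y) = Quot.mk _ (s, Φ^[n] y) := by
  rcases n.eq_zero_or_pos with rfl | hn
  · simp [birkhoffSum_zero]
  · exact Quot.sound ⟨n, hn, Or.inl ⟨rfl, add_comm _ _⟩⟩

lemma mul_le_birkhoffSum {δ : ℝ} (hτδ : ∀ y, δ ≤ τ y) (n : ℕ) (x : S) :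
    n * δ ≤ birkhoffSum Φ τ n x := by
  simpa [birkhoffSum] using Finset.card_nsmul_le_sum (Finset.range n) _ δ fun i _ => hτδ (Φ^[i] x)

lemma exists_birkhoffSum_le_lt {δ : ℝ} (hδ : 0 < δ) (hτδ : ∀ y, δ ≤ τ y) {t : ℝ} (ht : 0 ≤ t)
    (x : S) : ∃ n, birkhoffSum Φ τ n x ≤ t ∧ t < birkhoffSum Φ τ (n + 1) x := by
  classical
  have hex : ∃ n, t < birkhoffSum Φ τ n x := by
    obtain ⟨n, hn⟩ := exists_nat_gt (t / δ)
    exact ⟨n, ((div_lt_iff₀ hδ).1 hn).trans_le (mul_le_birkhoffSum hτδ n x)⟩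
  obtain ⟨n, hn⟩ := Nat.exists_eq_add_one_of_ne_zero (n := Nat.find hex) fun h0 => by
    have := Nat.find_spec hex
    rw [h0, birkhoffSum_zero] at this
    linarith
  exact ⟨n, not_lt.1 (Nat.find_min hex (by omega)), hn ▸ Nat.find_spec hex⟩

lemma exists_quot_mk_eq_of_mem_Ico (hΦ : Function.Surjective Φ) {δ : ℝ} (hδ : 0 < δ)
    (hτδ : ∀ y, δ ≤ τ y) (p : ℝ × S) :
    ∃ q : ℝ × S, (0 ≤ q.1 ∧ q.1 < τ q.2) ∧
      Quot.mk (suspensionRel Φ τ) q = Quot.mk _ p := by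
  obtain ⟨t, x⟩ := p
  obtain ⟨m, hm⟩ := exists_nat_gt (-t / δ)
  obtain ⟨y, rfl⟩ := (hΦ.iterate m) x
  have ht : 0 ≤ t + birkhoffSum Φ τ m y := by
    linarith [(div_lt_iff₀ hδ).1 hm, mul_le_birkhoffSum (Φ := Φ) hτδ m y]
  obtain ⟨n, hn, hn'⟩ := exists_birkhoffSum_le_lt hδ hτδ ht y
  rw [birkhoffSum_succ] at hn'
  refine ⟨(t + birkhoffSum Φ τ m y - birkhoffSum Φ τ n y, Φ^[n] y),
    ⟨sub_nonneg.2 hn, by linarith⟩, ?_⟩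
  rw [← quot_mk_add_birkhoffSum, sub_add_cancel, quot_mk_add_birkhoffSum]

lemma compactSpace_quot_suspensionRel [TopologicalSpace S] [CompactSpace S]
    (hΦ : Function.Surjective Φ) (hτ : Continuous τ) {δ : ℝ} (hδ : 0 < δ)
    (hτδ : ∀ y, δ ≤ τ y) : CompactSpace (Quot (suspensionRel Φ τ)) := by
  obtain ⟨T, hT⟩ := (isCompact_range hτ).bddAbove
  have himg : Quot.mk (suspensionRel Φ τ) '' (Icc 0 T ×ˢ univ) = univ := by
    refine eq_univ_of_forall fun z => ?_
    obtain ⟨p, rfl⟩ := Quot.exists_rep z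
    obtain ⟨q, hq, hqp⟩ := exists_quot_mk_eq_of_mem_Ico hΦ hδ hτδ p
    exact ⟨q, ⟨⟨hq.1, hq.2.le.trans (hT ⟨q.2, rfl⟩)⟩, trivial⟩, hqp⟩
  exact ⟨himg ▸ (isCompact_Icc.prod isCompact_univ).image continuous_quot_mk⟩

end Suspension

section SuspensionFlow

variable {X : Type*} [TopologicalSpace X] (φ : Flow ℝ X) {S : Set X} {Φ : S → S} {τ : S → ℝ}

lemma coe_iterate_eq_flow_birkhoffSum (hΦτ : ∀ y, (Φ y : X) = φ (τ y) y) (n : ℕ) (y : S) :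
    ((Φ^[n] y : S) : X) = φ (birkhoffSum Φ τ n y) y := by
  induction n with
  | zero => simp [φ.map_zero_apply]
  | succ n ih =>
    rw [birkhoffSum_succ, Function.iterate_succ_apply', hΦτ, ih, ← φ.map_add, add_comm]

lemma flow_eq_of_suspensionRel (hΦτ : ∀ y, (Φ y : X) = φ (τ y) y) {p q : ℝ × S}
    (h : suspensionRel Φ τ p q) : φ p.1 p.2 = φ q.1 q.2 := by
  have step : ∀ {p q : ℝ × S} {n : ℕ}, q.2 = Φ^[n] p.2 →
      p.1 = birkhoffSum Φ τ n p.2 + q.1 → φ p.1 p.2 = φ q.1 q.2 := by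
    intro p q n h₂ h₁
    rw [h₁, add_comm, φ.map_add, ← coe_iterate_eq_flow_birkhoffSum φ hΦτ, ← h₂]
  obtain ⟨n, -, ⟨h₂, h₁⟩ | ⟨h₂, h₁⟩⟩ := h
  exacts [step h₂ h₁, (step h₂ h₁).symm]

def suspensionMap (hΦτ : ∀ y, (Φ y : X) = φ (τ y) y) : Quot (suspensionRel Φ τ) → X :=
  Quot.lift (fun p => φ p.1 p.2) fun _ _ => flow_eq_of_suspensionRel φ hΦτ

lemma continuous_suspensionMap (hΦτ : ∀ y, (Φ y : X) = φ (τ y) y) :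
    Continuous (suspensionMap φ hΦτ) :=
  continuous_quot_lift _ (φ.continuous continuous_fst (continuous_subtype_val.comp continuous_snd))

lemma eq_of_flow_eq_of_mem_Ico (hret : ∀ (y : S) u, 0 < u → φ u (y : X) ∈ S → τ y ≤ u)
    {p q : ℝ × S} (hp : 0 ≤ p.1 ∧ p.1 < τ p.2) (hq : 0 ≤ q.1 ∧ q.1 < τ q.2)
    (h : φ p.1 p.2 = φ q.1 q.2) : p = q := by
  wlog hle : q.1 ≤ p.1 generalizing p q
  · exact (this hq hp h.symm (le_of_not_ge hle)).symm
  have hpq : φ (p.1 - q.1) p.2 = q.2 :=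
    (φ.toHomeomorph q.1).injective (by simpa [← φ.map_add] using h)
  rcases hle.eq_or_lt with heq | hlt
  · rw [heq, sub_self, φ.map_zero_apply] at hpq
    exact Prod.ext heq.symm (Subtype.ext hpq)
  · have := hret p.2 (p.1 - q.1) (by linarith) (hpq ▸ q.2.2)
    linarith

lemma existsUnique_mem_Ico_quot_mk_eq (hΦτ : ∀ y, (Φ y : X) = φ (τ y) y)
    (hret : ∀ (y : S) u, 0 < u → φ u (y : X) ∈ S → τ y ≤ u) (hΦ : Function.Surjective Φ)
    {δ : ℝ} (hδ : 0 < δ) (hτδ : ∀ y, δ ≤ τ y) (z : Quot (suspensionRel Φ τ)) :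
    ∃! p : ℝ × S, (0 ≤ p.1 ∧ p.1 < τ p.2) ∧ Quot.mk _ p = z := by
  obtain ⟨p, rfl⟩ := Quot.exists_rep z
  obtain ⟨q, hq, hqp⟩ := exists_quot_mk_eq_of_mem_Ico hΦ hδ hτδ p
  refine ⟨q, ⟨hq, hqp⟩, fun q' ⟨hq', hq'p⟩ => eq_of_flow_eq_of_mem_Ico φ hret hq' hq ?_⟩
  exact congrArg (suspensionMap φ hΦτ) (hq'p.trans hqp.symm)

lemma suspensionMap_injective (hΦτ : ∀ y, (Φ y : X) = φ (τ y) y)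
    (hret : ∀ (y : S) u, 0 < u → φ u (y : X) ∈ S → τ y ≤ u) (hΦ : Function.Surjective Φ)
    {δ : ℝ} (hδ : 0 < δ) (hτδ : ∀ y, δ ≤ τ y) : Function.Injective (suspensionMap φ hΦτ) := by
  intro z z' h
  obtain ⟨p, hp, rfl⟩ := (existsUnique_mem_Ico_quot_mk_eq φ hΦτ hret hΦ hδ hτδ z).exists
  obtain ⟨p', hp', rfl⟩ := (existsUnique_mem_Ico_quot_mk_eq φ hΦτ hret hΦ hδ hτδ z').exists
  rw [eq_of_flow_eq_of_mem_Ico φ hret hp hp' h]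

end SuspensionFlow

theorem suspension_homeomorphic_general {X : Type*} [MetricSpace X]
    (φ : Flow ℝ X) (hmin : φ.IsMinimal)
    (B : Set X) (l : ℝ) (hB : IsFlowbox φ B l) (hBint : (interior B).Nonempty)
    (S : Set X) (hS : S = centralSlice φ B)
    -- `Φ` is the first return map, as a homeomorphism of `S`:
    (Φ : S ≃ₜ S) (hΦ : ∀ y : S, (Φ y : X) = firstReturnMap φ S y)
    -- `τ` is the first return time, continuous and strictly positive:
    (τ : S → ℝ) (hτ : ∀ y : S, τ y = firstArriveTime φ S (y : X))
    (hτcont : Continuous τ) (hτpos : ∀ y : S, 0 < τ y)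
    -- `r` generates the suspension equivalence relation on `ℝ × S`:
    (r : (ℝ × S) → (ℝ × S) → Prop)
    (hr : ∀ p q : ℝ × S, r p q ↔ ∃ n : ℕ, 1 ≤ n ∧
      ((q.2 = (⇑Φ)^[n] p.2 ∧ p.1 = (∑ i ∈ Finset.range n, τ ((⇑Φ)^[i] p.2)) + q.1) ∨
       (p.2 = (⇑Φ)^[n] q.2 ∧ q.1 = (∑ i ∈ Finset.range n, τ ((⇑Φ)^[i] q.2)) + p.1))) :
    (∀ z : Quot r, ∃! p : ℝ × S, (0 ≤ p.1 ∧ p.1 < τ p.2) ∧ Quot.mk r p = z) ∧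
    ∃ ψ : Quot r ≃ₜ X, ∀ (t : ℝ) (y : S), ψ (Quot.mk r (t, y)) = φ t (y : X) := by
  obtain rfl : r = suspensionRel Φ τ := by
    ext p q
    exact hr p q
  have hΦτ : ∀ y : S, (Φ y : X) = φ (τ y) y := fun y => by rw [hΦ, firstReturnMap, hτ]
  have hret : ∀ (y : S) u, 0 < u → φ u (y : X) ∈ S → τ y ≤ u :=
    fun y u hu hy => hτ y ▸ firstArriveTime_le_s3 φ hu hy
  subst hS
  have : CompactSpace (centralSlice φ B) := isCompact_iff_compactSpace.1 hB.isCompact_centralSlice_s3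
  obtain ⟨δ, hδ, hτδ⟩ := isCompact_univ.exists_forall_le' hτcont.continuousOn fun y _ => hτpos y
  replace hτδ : ∀ y, δ ≤ τ y := fun y => hτδ y trivial
  have : CompactSpace (Quot (suspensionRel Φ τ)) :=
    compactSpace_quot_suspensionRel Φ.surjective hτcont hδ hτδ
  refine ⟨existsUnique_mem_Ico_quot_mk_eq φ hΦτ hret Φ.surjective hδ hτδ, ?_⟩
  have hsurj : Function.Surjective (suspensionMap φ hΦτ) := fun z => by
    obtain ⟨y, hy, t, rfl⟩ := hmin.exists_mem_centralSlice_flow_eq hB hBint z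
    exact ⟨Quot.mk _ (t, ⟨y, hy⟩), rfl⟩
  have hbij : Function.Bijective (suspensionMap φ hΦτ) :=
    ⟨suspensionMap_injective φ hΦτ hret Φ.surjective hδ hτδ, hsurj⟩
  exact ⟨(continuous_suspensionMap φ hΦτ).homeoOfEquivCompactToT2
    (f := Equiv.ofBijective _ hbij), fun _ _ => rfl⟩

/-- a free minimal flow on a compact metric space with a Cantor central slice
`S` is (equivariantly) homeomorphic to the suspension of the first return map on `S` with
respect to the first return time; every class of the suspension has a unique representative
`(s, y)` with `y ∈ S` and `0 ≤ s < τ(y)`. -/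
theorem suspension_homeomorphic {X : Type*} [MetricSpace X] [CompactSpace X]
    (φ : Flow ℝ X) (hfree : φ.IsFree) (hmin : φ.IsMinimal)
    (B : Set X) (l : ℝ) (hB : IsFlowbox φ B l) (hBint : (interior B).Nonempty)
    (S : Set X) (hS : S = centralSlice φ B)
    -- `S` is a Cantor space:
    (hSne : S.Nonempty) (hStd : IsTotallyDisconnected S) (hSperf : Perfect S)
    -- `Φ` is the first return map, as a homeomorphism of `S`:
    (Φ : S ≃ₜ S) (hΦ : ∀ y : S, (Φ y : X) = firstReturnMap φ S y)
    -- `τ` is the first return time, continuous and strictly positive: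
    (τ : S → ℝ) (hτ : ∀ y : S, τ y = firstArriveTime φ S (y : X))
    (hτcont : Continuous τ) (hτpos : ∀ y : S, 0 < τ y)
    -- `r` generates the suspension equivalence relation on `ℝ × S`:
    (r : (ℝ × S) → (ℝ × S) → Prop)
    (hr : ∀ p q : ℝ × S, r p q ↔ ∃ n : ℕ, 1 ≤ n ∧
      ((q.2 = (⇑Φ)^[n] p.2 ∧ p.1 = (∑ i ∈ Finset.range n, τ ((⇑Φ)^[i] p.2)) + q.1) ∨
       (p.2 = (⇑Φ)^[n] q.2 ∧ q.1 = (∑ i ∈ Finset.range n, τ ((⇑Φ)^[i] q.2)) + p.1))) :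
    (∀ z : Quot r, ∃! p : ℝ × S, (0 ≤ p.1 ∧ p.1 < τ p.2) ∧ Quot.mk r p = z) ∧
    ∃ ψ : Quot r ≃ₜ X, ∀ (t : ℝ) (y : S), ψ (Quot.mk r (t, y)) = φ t (y : X) :=
  suspension_homeomorphic_general φ hmin B l hB hBint S hS Φ hΦ τ hτ hτcont hτpos r hr
end

section
/- Let Φ be a minimal homeomorphism of a Cantor space S and let S' ⊆ S be a nonempty clopen subset, with induced first return map Φ' : S' → S'. Let f : S → ℤ be continuous and vanishing outside Φ^{-1}(S'). Then for every y ∈ S', ι(f)((Φ')^{-1}(y)) = ι(f ∘ Φ^{-1})(y); that is, ι(f) ∘ (Φ')^{-1} = ι(f ∘ Φ^{-1}) as functions on S'. -/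
open Set

/-- First return time of `Φ` to the set `T`: `min {n ≥ 1 | Φⁿ(y) ∈ T}`. -/
noncomputable def retTime {S : Type*} (Φ : S → S) (T : Set S) (y : S) : ℕ :=
  sInf {n : ℕ | 1 ≤ n ∧ Φ^[n] y ∈ T}

/-- Induced (first return) map of `Φ` on the set `T`: `y ↦ Φ^{retTime}(y)`. -/
noncomputable def indMap {S : Type*} (Φ : S → S) (T : Set S) (y : S) : S :=
  Φ^[retTime Φ T y] y

/-- A homeomorphism is *minimal* if every orbit is dense. -/
def Homeomorph.IsMinimal {S : Type*} [TopologicalSpace S] (Φ : S ≃ₜ S) : Prop :=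
  ∀ x : S, Dense {y : S | ∃ n : ℕ, (⇑Φ)^[n] x = y ∨ (⇑Φ.symm)^[n] x = y}

/-!
Only the top floor `Φ^{τ-1}(z)` of the tower over `z` can carry a nonzero value of `f`, and
only the base `y` of the tower over `y` a nonzero value of `f ∘ Φ⁻¹`; when `Φ'(z) = y` both
values are `f (Φ⁻¹ y)`. Minimality and compactness guarantee that every point does return to
`S'`, so that the first return times are at least `1`.
-/

theorem Homeomorph.iterate_symm_iterate {S : Type*} [TopologicalSpace S] (Φ : S ≃ₜ S)
    {m n : ℕ} (h : n ≤ m) (x : S) : (⇑Φ.symm)^[n] ((⇑Φ)^[m] x) = (⇑Φ)^[m - n] x := by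
  obtain ⟨d, rfl⟩ := Nat.exists_eq_add_of_le h
  rw [Function.iterate_add_apply, Function.LeftInverse.iterate Φ.symm_apply_apply n,
    Nat.add_sub_cancel_left]

/-- Forward recurrence: by compactness, finitely many of the translates `Φ^{±n}⁻¹(U)` cover `S`,
so every point enters `U` after a bounded positive number of steps. -/
theorem Homeomorph.IsMinimal.exists_iterate_mem {S : Type*} [TopologicalSpace S] [CompactSpace S]
    {Φ : S ≃ₜ S} (hmin : Φ.IsMinimal) {U : Set S} (hU : IsOpen U) (hne : U.Nonempty) (x : S) :
    ∃ m, 1 ≤ m ∧ (⇑Φ)^[m] x ∈ U := by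
  set C : ℕ → Set S := fun n => (⇑Φ)^[n] ⁻¹' U ∪ (⇑Φ.symm)^[n] ⁻¹' U
  have hC_open (n : ℕ) : IsOpen (C n) :=
    (hU.preimage (Φ.continuous.iterate n)).union (hU.preimage (Φ.symm.continuous.iterate n))
  have hC_cover : univ ⊆ ⋃ n, C n := by
    intro w _
    obtain ⟨_, ⟨n, rfl | rfl⟩, hmem⟩ := (hmin w).exists_mem_open hU hne
    exacts [mem_iUnion.2 ⟨n, .inl hmem⟩, mem_iUnion.2 ⟨n, .inr hmem⟩]
  obtain ⟨t, ht⟩ := isCompact_univ.elim_finite_subcover C hC_open hC_cover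
  set N := t.sup id + 1
  obtain ⟨n, hnt, hforward | hbackward⟩ := mem_iUnion₂.1 (ht (mem_univ ((⇑Φ)^[N] x)))
  · exact ⟨n + N, by omega, by rwa [Function.iterate_add_apply]⟩
  · have hnN : n < N := Nat.lt_succ_of_le (Finset.le_sup (f := id) hnt)
    refine ⟨N - n, by omega, ?_⟩
    rwa [mem_preimage, Φ.iterate_symm_iterate hnN.le] at hbackward

section ReturnTime

variable {S M : Type*} [AddCommMonoid M] {Φ : S → S} {T : Set S} {y : S}

theorem one_le_retTime (h : ∃ m, 1 ≤ m ∧ Φ^[m] y ∈ T) : 1 ≤ retTime Φ T y :=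
  (Nat.sInf_mem h).1

theorem iterate_notMem_of_lt_retTime {k : ℕ} (hk : 1 ≤ k) (hlt : k < retTime Φ T y) :
    Φ^[k] y ∉ T :=
  fun hmem => Nat.notMem_of_lt_sInf hlt ⟨hk, hmem⟩

theorem sum_range_retTime_eq_apply_iterate_pred {f : S → M} (hf : ∀ x, Φ x ∉ T → f x = 0)
    (h : ∃ m, 1 ≤ m ∧ Φ^[m] y ∈ T) :
    ∑ k ∈ Finset.range (retTime Φ T y), f (Φ^[k] y) = f (Φ^[retTime Φ T y - 1] y) := by
  have hτ := one_le_retTime h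
  refine Finset.sum_eq_single_of_mem _ (Finset.mem_range.2 (by omega)) fun k hk hne => hf _ ?_
  rw [← Function.iterate_succ_apply' Φ]
  exact iterate_notMem_of_lt_retTime (Nat.succ_pos k) (by have := Finset.mem_range.1 hk; omega)

theorem sum_range_retTime_eq_apply_self {g : S → M} (hg : ∀ x ∉ T, g x = 0)
    (h : ∃ m, 1 ≤ m ∧ Φ^[m] y ∈ T) :
    ∑ k ∈ Finset.range (retTime Φ T y), g (Φ^[k] y) = g y :=
  Finset.sum_eq_single_of_mem 0 (Finset.mem_range.2 (one_le_retTime h)) fun _ hk hne =>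
    hg _ (iterate_notMem_of_lt_retTime (Nat.one_le_iff_ne_zero.2 hne) (Finset.mem_range.1 hk))

end ReturnTime

theorem sum_over_tower_shift_general {S : Type*} [TopologicalSpace S] [CompactSpace S]
    (Φ : S ≃ₜ S) (hmin : Φ.IsMinimal)
    (S' : Set S) (hS' : IsClopen S') (hne : S'.Nonempty)
    (f : S → ℤ) (hf0 : ∀ y : S, Φ y ∉ S' → f y = 0) :
    ∀ y ∈ S', ∀ z ∈ S', indMap (⇑Φ) S' z = y →
      ∑ k ∈ Finset.range (retTime (⇑Φ) S' z), f ((⇑Φ)^[k] z)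
        = ∑ k ∈ Finset.range (retTime (⇑Φ) S' y), f (Φ.symm ((⇑Φ)^[k] y)) := by
  rintro _ - z - rfl
  have hreturn := hmin.exists_iterate_mem hS'.isOpen hne
  rw [sum_range_retTime_eq_apply_iterate_pred hf0 (hreturn z),
    sum_range_retTime_eq_apply_self (g := fun x => f (Φ.symm x))
      (fun x hx => hf0 _ (by rwa [Φ.apply_symm_apply])) (hreturn _),
    indMap, ← Φ.iterate_symm_iterate (one_le_retTime (hreturn z)),
    Function.iterate_one]

/-- if a continuous `f : S → ℤ` vanishes outside `Φ⁻¹(S')`, then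
`ι(f) ∘ (Φ')⁻¹ = ι(f ∘ Φ⁻¹)` on `S'`, where `Φ'` is the induced first return map on `S'`. -/
theorem sum_over_tower_shift {S : Type*} [TopologicalSpace S] [CompactSpace S]
    [TopologicalSpace.MetrizableSpace S] [TotallyDisconnectedSpace S] [Nonempty S]
    [PerfectSpace S]
    (Φ : S ≃ₜ S) (hmin : Φ.IsMinimal)
    (S' : Set S) (hS' : IsClopen S') (hne : S'.Nonempty)
    (f : S → ℤ) (hf : Continuous f) (hf0 : ∀ y : S, Φ y ∉ S' → f y = 0) :
    ∀ y ∈ S', ∀ z ∈ S', indMap (⇑Φ) S' z = y →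
      ∑ k ∈ Finset.range (retTime (⇑Φ) S' z), f ((⇑Φ)^[k] z)
        = ∑ k ∈ Finset.range (retTime (⇑Φ) S' y), f (Φ.symm ((⇑Φ)^[k] y)) :=
  sum_over_tower_shift_general Φ hmin S' hS' hne f hf0
end

section
/- Let X be a compact metric space, φ a free minimal flow on X, and let S be the central slice of a flowbox with nonempty interior. Then for every x ∈ X the set R(x) = {t > 0 : φ_t(x) ∈ S} is nonempty and has a minimum (which is strictly positive); consequently the first arrive time τ_S(x) = min{t > 0 : φ_t(x) ∈ S} and the first return map Φ_S(x) = φ_{τ_S(x)}(x) ∈ S are well defined on all of X. -/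
open Set

/-! A point `y` of the central slice of a flowbox of length `l` stays in the box exactly for the
times in `[-l/2, l/2]` and leaves it right after `l/2`. Hence two visits of an orbit to the slice
are more than `l` apart, so a positive return time within `l/2` of the infimum of all of them is
their minimum. Return times exist:
by minimality the forward orbit enters the interior of the box, and flowing a point of the box
to the middle of its visit interval lands in the central slice. -/

theorem le_of_Icc_subset_of_forall_Ioo_notMem {T : Set ℝ} {a b c ε : ℝ} (hca : c ≤ a)
    (hε : 0 < ε) (hb : Icc c b ⊆ T) (ha : ∀ t ∈ Ioo a (a + ε), t ∉ T) : b ≤ a := by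
  by_contra! hab
  obtain ⟨t, hat, htb⟩ := exists_between (lt_min hab (lt_add_of_pos_right a hε))
  exact ha t ⟨hat, htb.trans_le (min_le_right _ _)⟩
    (hb ⟨hca.trans hat.le, (htb.trans_le (min_le_left _ _)).le⟩)

theorem le_of_Icc_subset_of_forall_Ioo_notMem' {T : Set ℝ} {a b c ε : ℝ} (hac : a ≤ c)
    (hε : 0 < ε) (hb : Icc b c ⊆ T) (ha : ∀ t ∈ Ioo (a - ε) a, t ∉ T) : a ≤ b := by
  by_contra! hba
  obtain ⟨t, hbt, hta⟩ := exists_between (max_lt hba (sub_lt_self a hε))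
  exact ha t ⟨(le_max_right _ _).trans_lt hbt, hta⟩
    (hb ⟨(le_max_left _ _).trans hbt.le, hta.le.trans hac⟩)

theorem exists_isLeast_of_forall_lt_sub {R : Set ℝ} (hne : R.Nonempty) (hbdd : BddBelow R)
    {l : ℝ} (hl : 0 < l) (hsep : ∀ s ∈ R, ∀ t ∈ R, s < t → l < t - s) : ∃ s, IsLeast R s := by
  obtain ⟨s, hsR, hs⟩ := Real.lt_sInf_add_pos hne hl
  refine ⟨s, hsR, fun t htR => not_lt.1 fun hts => ?_⟩
  have := hsep t htR s hsR hts
  linarith [csInf_le hbdd htR]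

namespace IsFlowbox

variable {X : Type*} [TopologicalSpace X] {φ : Flow ℝ X} {B : Set X} {l : ℝ}

theorem eq_half_of_mem_centralSlice (hB : IsFlowbox φ B l) {y : X} (hyB : y ∈ B) {a ε : ℝ}
    (ha : 0 ≤ a) (hε : 0 < ε) (hIn : ∀ t ∈ Icc (-a) a, φ t y ∈ B)
    (hOut : ∀ t ∈ Ioo (-a - ε) (-a) ∪ Ioo a (a + ε), φ t y ∉ B) : a = l / 2 := by
  obtain ⟨am, ap, δ, ham, hap, hδ, hl, hIn', hOut'⟩ := hB.2.2 y hyB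
  have h₁ : ap ≤ a := le_of_Icc_subset_of_forall_Ioo_notMem (T := {t | φ t y ∈ B})
    (by linarith) hε hIn' fun t ht => hOut t (Or.inr ht)
  have h₂ : a ≤ ap := le_of_Icc_subset_of_forall_Ioo_notMem (T := {t | φ t y ∈ B})
    (by linarith) hδ hIn fun t ht => hOut' t (Or.inr ht)
  have h₃ : -a ≤ am := le_of_Icc_subset_of_forall_Ioo_notMem' (T := {t | φ t y ∈ B})
    (by linarith) hε hIn' fun t ht => hOut t (Or.inl ht)
  have h₄ : am ≤ -a := le_of_Icc_subset_of_forall_Ioo_notMem' (T := {t | φ t y ∈ B})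
    (by linarith) hδ hIn fun t ht => hOut' t (Or.inl ht)
  linarith

theorem lt_of_mem_centralSlice (hB : IsFlowbox φ B l) {y : X} (hy : y ∈ centralSlice φ B)
    {s : ℝ} (hs : 0 < s) (hsy : φ s y ∈ centralSlice φ B) : l < s := by
  obtain ⟨hyB, a, ha, hIn, ε, hε, hOut⟩ := hy
  obtain ⟨hsyB, b, hb, hsIn, δ, hδ, hsOut⟩ := hsy
  obtain rfl := hB.eq_half_of_mem_centralSlice hyB ha hε hIn hOut
  obtain rfl := hB.eq_half_of_mem_centralSlice hsyB hb hδ hsIn hsOut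
  by_contra! hsl
  have hvisit : Icc (s - l / 2) (s + l / 2) ⊆ {t | φ t y ∈ B} := fun t ht => by
    have := hsIn (t - s) ⟨by linarith [ht.1], by linarith [ht.2]⟩
    rwa [← φ.map_add, sub_add_cancel] at this
  have := le_of_Icc_subset_of_forall_Ioo_notMem (by linarith) hε hvisit
    fun t ht => hOut t (Or.inr ht)
  linarith

theorem exists_flow_mem_centralSlice_s11 (hB : IsFlowbox φ B l) {w : X} (hw : w ∈ B) :
    ∃ c, -(l / 2) ≤ c ∧ φ c w ∈ centralSlice φ B := by
  obtain ⟨am, ap, ε, ham, hap, hε, hl, hIn, hOut⟩ := hB.2.2 w hw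
  have hshift : ∀ u, φ u (φ ((am + ap) / 2) w) = φ (u + (am + ap) / 2) w :=
    fun u => (φ.map_add _ _ _).symm
  refine ⟨(am + ap) / 2, by linarith, hIn _ ⟨by linarith, by linarith⟩, l / 2, by linarith,
    fun u hu => ?_, ε, hε, fun u hu => ?_⟩
  · rw [hshift]
    exact hIn _ ⟨by linarith [hu.1], by linarith [hu.2]⟩
  · rw [hshift]
    rcases hu with hu | hu
    · exact hOut _ (Or.inl ⟨by linarith [hu.1], by linarith [hu.2]⟩)
    · exact hOut _ (Or.inr ⟨by linarith [hu.1], by linarith [hu.2]⟩)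

theorem exists_pos_flow_mem_centralSlice (hB : IsFlowbox φ B l) (hmin : φ.IsMinimal)
    (hBint : (interior B).Nonempty) (x : X) : ∃ t, 0 < t ∧ φ t x ∈ centralSlice φ B := by
  obtain ⟨w, hwB, t, ht, rfl⟩ :=
    (hmin (φ l x)).inter_open_nonempty (interior B) isOpen_interior hBint
  obtain ⟨c, hc, hcw⟩ := hB.exists_flow_mem_centralSlice_s11 (interior_subset hwB)
  refine ⟨c + t + l, by linarith [hB.2.1], ?_⟩
  simpa only [φ.map_add] using hcw

end IsFlowbox

theorem firstArriveTime_isLeast_general {X : Type*} [MetricSpace X]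
    (φ : Flow ℝ X) (hmin : φ.IsMinimal)
    (B : Set X) (l : ℝ) (hB : IsFlowbox φ B l) (hBint : (interior B).Nonempty)
    (S : Set X) (hS : S = centralSlice φ B) :
    ∀ x : X,
      IsLeast {t : ℝ | 0 < t ∧ φ t x ∈ S} (firstArriveTime φ S x) ∧
      0 < firstArriveTime φ S x ∧
      firstReturnMap φ S x ∈ S := by
  subst hS
  intro x
  set R := {t : ℝ | 0 < t ∧ φ t x ∈ centralSlice φ B}
  have hsep : ∀ s ∈ R, ∀ t ∈ R, s < t → l < t - s := fun s hs t ht hst =>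
    hB.lt_of_mem_centralSlice hs.2 (sub_pos.2 hst)
      (by rw [← φ.map_add, sub_add_cancel]; exact ht.2)
  obtain ⟨s, hs⟩ := exists_isLeast_of_forall_lt_sub
    (hB.exists_pos_flow_mem_centralSlice hmin hBint x) ⟨0, fun t ht => ht.1.le⟩ hB.2.1 hsep
  have hτ : firstArriveTime φ (centralSlice φ B) x = s := hs.csInf_eq
  rw [firstReturnMap, hτ]
  exact ⟨hs, hs.1⟩

/-- for a free minimal flow on a compact metric space and a central slice `S`
of a flowbox with nonempty interior, the set `{t > 0 | φ_t(x) ∈ S}` has a (strictly positive)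
minimum for every `x`, so the first arrive time and the first return map are well defined. -/
theorem firstArriveTime_isLeast {X : Type*} [MetricSpace X] [CompactSpace X]
    (φ : Flow ℝ X) (hfree : φ.IsFree) (hmin : φ.IsMinimal)
    (B : Set X) (l : ℝ) (hB : IsFlowbox φ B l) (hBint : (interior B).Nonempty)
    (S : Set X) (hS : S = centralSlice φ B) :
    ∀ x : X,
      IsLeast {t : ℝ | 0 < t ∧ φ t x ∈ S} (firstArriveTime φ S x) ∧
      0 < firstArriveTime φ S x ∧
      firstReturnMap φ S x ∈ S :=
  firstArriveTime_isLeast_general φ hmin B l hB hBint S hS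
end
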